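/- arXiv:2012.10592 — 15 statements merged into one kernel-verified Lean document; each statement's English description precedes it below -/
import Mathlib

section
/- Fundamental Lemma: Let F = ⟨A, →⟩ be an AAF and let ℓ, m, n be positive integers with n ≥ ℓ ≥ m. Then for every ℓmn-admissible set E ⊆ A and every ordinal ξ, E ⊆ D^ξ(E) ⊆ N_ℓ(D^ξ(E)) ⊆ N_ℓ(E); that is, every transfinite iterate of the graded defense function starting at E contains E, is ℓ-conflict-free, and is contained in N_ℓ(E). -/
open Set

variable {A : Type*}

/-- Graded neutrality function `N_ℓ`: arguments not attacked by `ℓ` distinct members of `E`. -/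
def gradedNeutrality (att : A → A → Prop) (ℓ : ℕ) (E : Set A) : Set A :=
  {a | ¬ ∃ B : Finset A, B.card = ℓ ∧ (↑B : Set A) ⊆ E ∧ ∀ b ∈ B, att b a}

/-- Graded defense function `D_n^m = N_m ∘ N_n`. -/
def gradedDefense (att : A → A → Prop) (m n : ℕ) (E : Set A) : Set A :=
  gradedNeutrality att m (gradedNeutrality att n E)

/-- `E` is ℓ-conflict-free. -/
def IsConflictFree (att : A → A → Prop) (ℓ : ℕ) (E : Set A) : Prop :=
  E ⊆ gradedNeutrality att ℓ E

/-- `E` is ℓmn-admissible. -/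
def IsAdmissible (att : A → A → Prop) (ℓ m n : ℕ) (E : Set A) : Prop :=
  E ⊆ gradedNeutrality att ℓ E ∧ E ⊆ gradedDefense att m n E

/-- `E` is an ℓmn-complete extension. -/
def IsCompleteExt (att : A → A → Prop) (ℓ m n : ℕ) (E : Set A) : Prop :=
  E ⊆ gradedNeutrality att ℓ E ∧ E = gradedDefense att m n E

/-- `E` is an ℓmn-stable extension. -/
def IsStableExt (att : A → A → Prop) (ℓ m n : ℕ) (E : Set A) : Prop :=
  E = gradedNeutrality att n E ∧ E = gradedNeutrality att m E ∧
    E ⊆ gradedNeutrality att ℓ E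

/-- The AAF is finitary: every argument has finitely many attackers. -/
def IsFinitary (att : A → A → Prop) : Prop :=
  ∀ a : A, {b | att b a}.Finite

/-- `E_η^+`: arguments attacked by `η` distinct members of `E`. -/
def rangePlus (att : A → A → Prop) (η : ℕ) (E : Set A) : Set A :=
  {a | ∃ B : Finset A, B.card = η ∧ (↑B : Set A) ⊆ E ∧ ∀ b ∈ B, att b a}

/-- The range `E ∪ E_η^+` of `E`. -/
def rangeOf (att : A → A → Prop) (η : ℕ) (E : Set A) : Set A :=
  E ∪ rangePlus att η E

/-- Reduced meet of the family `X` modulo the ultrafilter `D`. -/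
def reducedMeet {I : Type*} (D : Ultrafilter I) (X : I → Set A) : Set A :=
  {a | {i | a ∈ X i} ∈ D}

/-- `L` is the least fixed point of `f` containing `E`. -/
def IsLfpOver (f : Set A → Set A) (E L : Set A) : Prop :=
  f L = L ∧ E ⊆ L ∧ ∀ L', f L' = L' → E ⊆ L' → L ⊆ L'

/-- `r` is well-founded on `S`: there is no infinite `r`-decreasing sequence in `S`. -/
def WellFoundedOnSet (r : A → A → Prop) (S : Set A) : Prop :=
  ¬ ∃ f : ℕ → A, (∀ i, f i ∈ S) ∧ ∀ i, r (f (i + 1)) (f i)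

lemma neut_anti (att : A → A → Prop) (ℓ : ℕ) {E E' : Set A} (h : E ⊆ E') :
    gradedNeutrality att ℓ E' ⊆ gradedNeutrality att ℓ E := by
  rintro a ha ⟨B, hc, hs, hatt⟩
  exact ha ⟨B, hc, hs.trans h, hatt⟩

lemma neut_mono_idx (att : A → A → Prop) {ℓ ℓ' : ℕ} (h : ℓ ≤ ℓ') (E : Set A) :
    gradedNeutrality att ℓ E ⊆ gradedNeutrality att ℓ' E := by
  rintro a ha ⟨B, hc, hs, hatt⟩
  obtain ⟨B', hB'B, hB'c⟩ := Finset.exists_subset_card_eq (s := B) (n := ℓ) (by omega)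
  exact ha ⟨B', hB'c, (Finset.coe_subset.2 hB'B).trans hs,
    fun b hb => hatt b (hB'B hb)⟩

lemma defense_mono (att : A → A → Prop) (m n : ℕ) {S T : Set A} (h : S ⊆ T) :
    gradedDefense att m n S ⊆ gradedDefense att m n T :=
  neut_anti att m (neut_anti att n h)

lemma defense_cf (att : A → A → Prop) {ℓ m n : ℕ} (hml : m ≤ ℓ) (hln : ℓ ≤ n)
    {S : Set A} (hcf : S ⊆ gradedNeutrality att ℓ S) :
    gradedDefense att m n S ⊆ gradedNeutrality att ℓ (gradedDefense att m n S) := by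
  rintro a ha ⟨B, hBc, hBs, hBatt⟩
  obtain ⟨B', hB'B, hB'c⟩ := Finset.exists_subset_card_eq (s := B) (n := m) (by omega)
  have hnot : ¬ (↑B' : Set A) ⊆ gradedNeutrality att n S := fun hsub =>
    ha ⟨B', hB'c, hsub, fun b hb => hBatt b (hB'B hb)⟩
  obtain ⟨b, hbB', hbN⟩ := not_subset.1 hnot
  have hbD : b ∈ gradedDefense att m n S := hBs (hB'B hbB')
  simp only [gradedNeutrality, mem_setOf_eq, not_not] at hbN
  obtain ⟨C, hCc, hCs, hCatt⟩ := hbN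
  obtain ⟨C', hC'C, hC'c⟩ := Finset.exists_subset_card_eq (s := C) (n := m) (by omega)
  exact hbD ⟨C', hC'c,
    fun x hx => neut_mono_idx att hln S (hcf (hCs (hC'C hx))),
    fun x hx => hCatt x (hC'C hx)⟩

/-- Fundamental Lemma: if `n ≥ ℓ ≥ m` and `E` is ℓmn-admissible, then every transfinite
iterate of the graded defense function starting at `E` contains `E`, is ℓ-conflict-free,
and is contained in `N_ℓ(E)`. -/
theorem fundamental_lemma {A : Type*} [Nonempty A] (att : A → A → Prop)
    (ℓ m n : ℕ) (hℓ : 0 < ℓ) (hm : 0 < m) (hn : 0 < n)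
    (hml : m ≤ ℓ) (hln : ℓ ≤ n)
    (E : Set A) (hE : IsAdmissible att ℓ m n E)
    (Dit : Ordinal → Set A)
    (h0 : Dit 0 = E)
    (hsucc : ∀ ξ : Ordinal, Dit (ξ + 1) = gradedDefense att m n (Dit ξ))
    (hlim : ∀ ξ : Ordinal, Order.IsSuccLimit ξ → Dit ξ = ⋃ (o : Ordinal) (_ : o < ξ), Dit o)
    (ξ : Ordinal) :
    E ⊆ Dit ξ ∧ Dit ξ ⊆ gradedNeutrality att ℓ (Dit ξ) ∧
      gradedNeutrality att ℓ (Dit ξ) ⊆ gradedNeutrality att ℓ E := by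
  obtain ⟨hcfE, hadE⟩ := hE
  have key : ∀ ξ : Ordinal, E ⊆ Dit ξ ∧ Dit ξ ⊆ gradedDefense att m n (Dit ξ) ∧
      Dit ξ ⊆ gradedNeutrality att ℓ (Dit ξ) ∧ ∀ η < ξ, Dit η ⊆ Dit ξ := by
    intro ξ
    induction ξ using Ordinal.induction with
    | h ξ IH =>
      rcases Ordinal.zero_or_succ_or_isSuccLimit ξ with rfl | ⟨η, rfl⟩ | hl
      · rw [h0]
        exact ⟨subset_rfl, hadE, hcfE, fun η hη => absurd hη (zero_le (a := η)).not_gt⟩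
      · have hs := hsucc η
        rw [Ordinal.add_one_eq_succ] at hs
        obtain ⟨hEη, hDη, hcfη, hchη⟩ := IH η (Order.lt_succ η)
        rw [hs]
        refine ⟨hEη.trans hDη, defense_mono att m n hDη, defense_cf att hml hln hcfη, ?_⟩
        intro η' hη'
        rcases (Order.lt_succ_iff.1 hη').lt_or_eq with h | rfl
        · exact (hchη η' h).trans hDη
        · exact hDη
      · have hmono : ∀ o o' : Ordinal, o ≤ o' → o' < ξ → Dit o ⊆ Dit o' := by
          intro o o' hle hlt
          rcases hle.lt_or_eq with h | rfl
          · exact (IH o' hlt).2.2.2 o h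
          · exact subset_rfl
        have hsub : ∀ o < ξ, Dit o ⊆ Dit ξ := by
          intro o ho
          rw [hlim ξ hl]
          exact subset_iUnion₂ (s := fun (o : Ordinal) (_ : o < ξ) => Dit o) o ho
        refine ⟨?_, ?_, ?_, hsub⟩
        · rw [← h0]; exact hsub 0 hl.pos
        · rw [hlim ξ hl]
          intro a ha
          obtain ⟨o, ho, hao⟩ := mem_iUnion₂.1 ha
          have := (IH o ho).2.1 hao
          exact (hlim ξ hl) ▸ defense_mono att m n (hsub o ho) this
        · rintro a ha ⟨B, hBc, hBs, hBatt⟩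
          rw [hlim ξ hl] at ha
          obtain ⟨oa, hoa, haa⟩ := mem_iUnion₂.1 ha
          have hBs' : ∀ b ∈ (B : Set A), ∃ o, ∃ _ : o < ξ, b ∈ Dit o := by
            intro b hb
            have := hBs hb
            rw [hlim ξ hl] at this
            exact mem_iUnion₂.1 this
          choose! g hg1 hg2 using hBs'
          set o' : Ordinal := (B.sup g) ⊔ oa with ho'def
          have hsup : B.sup g < ξ := by
            rcases B.eq_empty_or_nonempty with rfl | hne
            · simpa using hl.pos
            · rw [Finset.sup_lt_iff (by simpa [Ordinal.bot_eq_zero] using hl.pos)]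
              exact fun b hb => hg1 b (by exact_mod_cast hb)
          have ho' : o' < ξ := max_lt hsup hoa
          have hacf := (IH o' ho').2.2.1
          have haO : a ∈ Dit o' := hmono oa o' le_sup_right ho' haa
          refine hacf haO ⟨B, hBc, ?_, hBatt⟩
          intro b hb
          exact hmono (g b) o' (le_trans (Finset.le_sup (by exact_mod_cast hb)) le_sup_left) ho' (hg2 b hb)
  obtain ⟨h1, h2, h3, _⟩ := key ξ
  exact ⟨h1, h3, neut_anti att ℓ h1⟩
end

section
/- Galois adjunction between admissible sets and complete extensions: Let F = ⟨A, →⟩ be an AAF with n ≥ ℓ ≥ m. For an ℓmn-admissible set E, let c(E) denote the least fixed point of D_n^m containing E. Then for every ℓmn-admissible set E and every ℓmn-complete extension E′ of F, c(E) ⊆ E′ if and only if E ⊆ E′; moreover c maps ℓmn-admissible sets to ℓmn-complete extensions and is monotone with respect to ⊆, so c together with the inclusion map forms a Galois connection between the posets of ℓmn-admissible sets and of ℓmn-complete extensions ordered by inclusion. -/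
open Set

variable {A : Type*}

section Helpers
variable {A : Type*} (att : A → A → Prop)

lemma neut_antitone {ℓ : ℕ} {X Y : Set A} (h : X ⊆ Y) :
    gradedNeutrality att ℓ Y ⊆ gradedNeutrality att ℓ X := by
  intro a ha ⟨B, hc, hs, hatt⟩
  exact ha ⟨B, hc, hs.trans h, hatt⟩

lemma neut_index_mono {k n : ℕ} (hkn : k ≤ n) (X : Set A) :
    gradedNeutrality att k X ⊆ gradedNeutrality att n X := by
  intro a ha ⟨B, hc, hs, hatt⟩
  obtain ⟨B', hB's, hB'c⟩ := Finset.exists_subset_card_eq (s := B) (n := k) (by rw [hc]; exact hkn)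
  exact ha ⟨B', hB'c, (Finset.coe_subset.mpr hB's).trans hs,
    fun b hb => hatt b (hB's hb)⟩

lemma def_mono {m n : ℕ} {X Y : Set A} (h : X ⊆ Y) :
    gradedDefense att m n X ⊆ gradedDefense att m n Y :=
  neut_antitone att (neut_antitone att h)

/-- Fundamental lemma: the defense of a conflict-free set is conflict-free
    (when `m ≤ ℓ ≤ n`). -/
lemma def_conflictFree {ℓ m n : ℕ} (hml : m ≤ ℓ) (hln : ℓ ≤ n) {X : Set A}
    (hcf : X ⊆ gradedNeutrality att ℓ X) :
    gradedDefense att m n X ⊆ gradedNeutrality att ℓ (gradedDefense att m n X) := by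
  have hXn : X ⊆ gradedNeutrality att n X :=
    hcf.trans (neut_index_mono att hln X)
  intro a ha ⟨B, hBc, hBs, hBatt⟩
  obtain ⟨B', hB's, hB'c⟩ := Finset.exists_subset_card_eq (s := B) (n := m) (by rw [hBc]; exact hml)
  by_cases hsub : (↑B' : Set A) ⊆ gradedNeutrality att n X
  · exact ha ⟨B', hB'c, hsub, fun b hb => hBatt b (hB's hb)⟩
  · rw [Set.not_subset] at hsub
    obtain ⟨b, hbB', hbn⟩ := hsub
    simp only [gradedNeutrality, mem_setOf_eq, not_not] at hbn
    obtain ⟨C, hCc, hCs, hCatt⟩ := hbn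
    obtain ⟨C', hC's, hC'c⟩ := Finset.exists_subset_card_eq (s := C) (n := m)
      (by rw [hCc]; exact hml.trans hln)
    have hb : b ∈ gradedDefense att m n X := hBs (hB's hbB')
    exact hb ⟨C', hC'c, (Finset.coe_subset.mpr hC's).trans (hCs.trans hXn),
      fun x hx => hCatt x (hC's hx)⟩

lemma chain_finset_subset {c : Set (Set A)} (hch : IsChain (· ⊆ ·) c)
    (hne : c.Nonempty) (T : Finset A) (hT : ↑T ⊆ ⋃₀ c) : ∃ X ∈ c, ↑T ⊆ X := by
  classical
  induction T using Finset.induction_on with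
  | empty => exact ⟨hne.choose, hne.choose_spec, by simp⟩
  | @insert a T ha ih =>
    obtain ⟨X, hXc, hTX⟩ := ih (by
      refine subset_trans ?_ hT; simp [Finset.coe_insert, Set.subset_insert])
    have haU : a ∈ ⋃₀ c := hT (by simp)
    obtain ⟨Y, hYc, haY⟩ := haU
    rcases hch.total hXc hYc with h | h
    · exact ⟨Y, hYc, by
        rw [Finset.coe_insert, Set.insert_subset_iff]
        exact ⟨haY, hTX.trans h⟩⟩
    · exact ⟨X, hXc, by
        rw [Finset.coe_insert, Set.insert_subset_iff]
        exact ⟨h haY, hTX⟩⟩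

/-- The least fixed point over an admissible set is conflict-free. -/
lemma lfp_conflictFree {ℓ m n : ℕ} (hml : m ≤ ℓ) (hln : ℓ ≤ n) {E L : Set A}
    (hE : IsAdmissible att ℓ m n E)
    (hL : IsLfpOver (gradedDefense att m n) E L) :
    L ⊆ gradedNeutrality att ℓ L := by
  classical
  obtain ⟨hfix, hEL, hleast⟩ := hL
  set S : Set (Set A) :=
    {X | E ⊆ X ∧ X ⊆ gradedNeutrality att ℓ X ∧ X ⊆ gradedDefense att m n X ∧ X ⊆ L}
    with hS
  have hES : E ∈ S := ⟨Subset.rfl, hE.1, hE.2, hEL⟩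
  have hchain : ∀ c ⊆ S, IsChain (· ⊆ ·) c → c.Nonempty →
      ∃ ub ∈ S, ∀ s ∈ c, s ⊆ ub := by
    intro c hcS hch hcne
    refine ⟨⋃₀ c, ⟨?_, ?_, ?_, ?_⟩, fun s hs => subset_sUnion_of_mem hs⟩
    · obtain ⟨X, hX⟩ := hcne
      exact (hcS hX).1.trans (subset_sUnion_of_mem hX)
    · rintro a ⟨X, hXc, haX⟩ ⟨B, hBc, hBs, hBatt⟩
      obtain ⟨Y, hYc, hY⟩ := chain_finset_subset hch hcne (insert a B)
        (by rw [Finset.coe_insert, Set.insert_subset_iff]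
            exact ⟨⟨X, hXc, haX⟩, hBs⟩)
      rw [Finset.coe_insert, Set.insert_subset_iff] at hY
      exact (hcS hYc).2.1 hY.1 ⟨B, hBc, hY.2, hBatt⟩
    · rintro a ⟨X, hXc, haX⟩
      exact def_mono att (subset_sUnion_of_mem hXc) ((hcS hXc).2.2.1 haX)
    · exact sUnion_subset fun X hX => (hcS hX).2.2.2
  obtain ⟨M, _, hMmax⟩ := zorn_subset_nonempty S hchain E hES
  obtain ⟨hEM, hMcf, hMD, hML⟩ := hMmax.prop
  have hDMS : gradedDefense att m n M ∈ S := by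
    refine ⟨hEM.trans hMD, def_conflictFree att hml hln hMcf, ?_, ?_⟩
    · exact def_mono att hMD
    · calc gradedDefense att m n M ⊆ gradedDefense att m n L := def_mono att hML
        _ = L := hfix
  have hMeq : gradedDefense att m n M = M := (hMmax.eq_of_subset hDMS hMD).symm
  have hLM : L = M := Subset.antisymm (hleast M hMeq hEM) hML
  rw [hLM]
  exact hMcf

end Helpers

/-- Galois adjunction between ℓmn-admissible sets and ℓmn-complete extensions:
if `n ≥ ℓ ≥ m` and `c` sends each ℓmn-admissible set `E` to the least fixed point of
`D_n^m` containing `E`, then `c E ⊆ E' ↔ E ⊆ E'` for every ℓmn-admissible `E` and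
ℓmn-complete `E'`; moreover `c` maps admissible sets to complete extensions and is
monotone. -/
theorem galois_adjunction_admissible_complete {A : Type*} [Nonempty A]
    (att : A → A → Prop)
    (ℓ m n : ℕ) (hℓ : 0 < ℓ) (hm : 0 < m) (hn : 0 < n)
    (hml : m ≤ ℓ) (hln : ℓ ≤ n)
    (c : Set A → Set A)
    (hc : ∀ E : Set A, IsAdmissible att ℓ m n E →
      IsLfpOver (gradedDefense att m n) E (c E)) :
    (∀ E E' : Set A, IsAdmissible att ℓ m n E → IsCompleteExt att ℓ m n E' →
      (c E ⊆ E' ↔ E ⊆ E')) ∧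
    (∀ E : Set A, IsAdmissible att ℓ m n E → IsCompleteExt att ℓ m n (c E)) ∧
    (∀ E₁ E₂ : Set A, IsAdmissible att ℓ m n E₁ → IsAdmissible att ℓ m n E₂ →
      E₁ ⊆ E₂ → c E₁ ⊆ c E₂) := by
  refine ⟨?_, ?_, ?_⟩
  · intro E E' hE hE'
    obtain ⟨hfix, hEc, hleast⟩ := hc E hE
    exact ⟨fun h => hEc.trans h, fun h => hleast E' hE'.2.symm h⟩
  · intro E hE
    obtain ⟨hfix, hEc, hleast⟩ := hc E hE
    exact ⟨lfp_conflictFree att hml hln hE (hc E hE), hfix.symm⟩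
  · intro E₁ E₂ hE₁ hE₂ h12
    obtain ⟨hfix₁, hEc₁, hleast₁⟩ := hc E₁ hE₁
    obtain ⟨hfix₂, hEc₂, hleast₂⟩ := hc E₂ hE₂
    exact hleast₁ (c E₂) hfix₂ (h12.trans hEc₂)
end

section
/- Let F = ⟨A, →⟩ be an AAF with n ≥ ℓ ≥ m. Then a set E ⊆ A is a ⊆-maximal ℓmn-complete extension of F if and only if E is a ⊆-maximal ℓmn-admissible set of F; that is, the ℓmn-preferred extensions coincide with the maximal ℓmn-admissible sets. -/
open Set

variable {A : Type*}

section Aux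

variable {att : A → A → Prop} {ℓ m n : ℕ} {E F : Set A}

lemma gn_antitone (h : E ⊆ F) : gradedNeutrality att ℓ F ⊆ gradedNeutrality att ℓ E := by
  intro a ha hex
  exact ha ⟨hex.choose, hex.choose_spec.1, hex.choose_spec.2.1.trans h, hex.choose_spec.2.2⟩

lemma gn_index_mono (h : ℓ ≤ n) : gradedNeutrality att ℓ E ⊆ gradedNeutrality att n E := by
  rintro a ha ⟨B, hB, hBE, hatt⟩
  obtain ⟨B', hB'B, hB'⟩ := Finset.exists_subset_card_eq (s := B) (n := ℓ) (hB ▸ h)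
  exact ha ⟨B', hB', (Finset.coe_subset.mpr hB'B).trans hBE, fun b hb => hatt b (hB'B hb)⟩

lemma gd_mono (h : E ⊆ F) : gradedDefense att m n E ⊆ gradedDefense att m n F :=
  gn_antitone (gn_antitone h)

/-- Fundamental lemma: adding a defended argument preserves admissibility. -/
lemma fund_lemma (hml : m ≤ ℓ) (hln : ℓ ≤ n)
    (hE : IsAdmissible att ℓ m n E) {a : A} (ha : a ∈ gradedDefense att m n E) :
    IsAdmissible att ℓ m n (insert a E) := by
  by_cases hN : a ∈ gradedNeutrality att n E
  · have hsub : insert a E ⊆ gradedNeutrality att n E := by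
      intro x hx
      rcases hx with rfl | hx
      · exact hN
      · exact gn_index_mono hln (hE.1 hx)
    constructor
    · rintro c hc ⟨B, hB, hBE, hatt⟩
      have hcD : c ∈ gradedDefense att m n E := by
        rcases hc with rfl | hc
        · exact ha
        · exact hE.2 hc
      obtain ⟨B', hB'B, hB'⟩ := Finset.exists_subset_card_eq (s := B) (n := m) (hB ▸ hml)
      exact hcD ⟨B', hB', ((Finset.coe_subset.mpr hB'B).trans hBE).trans hsub,
        fun b hb => hatt b (hB'B hb)⟩
    · intro x hx
      have hmono : gradedDefense att m n E ⊆ gradedDefense att m n (insert a E) :=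
        gd_mono (subset_insert a E)
      rcases hx with rfl | hx
      · exact hmono ha
      · exact hmono (hE.2 hx)
  · exfalso
    simp only [gradedNeutrality, Set.mem_setOf_eq, not_not] at hN
    obtain ⟨C, hC, hCE, hatt⟩ := hN
    obtain ⟨C', hC'C, hC'⟩ := Finset.exists_subset_card_eq (s := C) (n := m) (hC ▸ hml.trans hln)
    exact ha ⟨C', hC', fun b hb => gn_index_mono hln
      (hE.1 (hCE (Finset.coe_subset.mpr hC'C hb))),
      fun b hb => hatt b (hC'C hb)⟩

lemma max_adm_complete (hml : m ≤ ℓ) (hln : ℓ ≤ n)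
    (hE : IsAdmissible att ℓ m n E)
    (hmax : ∀ E' : Set A, IsAdmissible att ℓ m n E' → E ⊆ E' → E = E') :
    IsCompleteExt att ℓ m n E := by
  refine ⟨hE.1, Subset.antisymm hE.2 ?_⟩
  intro a ha
  have := hmax (insert a E) (fund_lemma hml hln hE ha) (subset_insert a E)
  rw [this]
  exact mem_insert a E

lemma chain_union_adm {c : Set (Set A)} (hc : IsChain (· ⊆ ·) c) (hne : c.Nonempty)
    (hadm : ∀ S ∈ c, IsAdmissible att ℓ m n S) :
    IsAdmissible att ℓ m n (⋃₀ c) := by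
  classical
  have key : ∀ B : Finset A, (↑B : Set A) ⊆ ⋃₀ c → ∃ S ∈ c, (↑B : Set A) ⊆ S := by
    intro B
    induction B using Finset.induction_on with
    | empty => intro _; exact ⟨hne.choose, hne.choose_spec, by simp⟩
    | insert _ _ hx ih =>
      rename_i x B
      intro h
      obtain ⟨S, hS, hBS⟩ := ih (by
        intro b hb; exact h (by simp at hb ⊢; exact Or.inr hb))
      obtain ⟨T, hT, hxT⟩ := h (Finset.mem_coe.mpr (Finset.mem_insert_self x B))
      rcases hc.total hS hT with hST | hTS
      · exact ⟨T, hT, by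
          intro b hb; simp at hb; rcases hb with rfl | hb
          · exact hxT
          · exact hST (hBS hb)⟩
      · exact ⟨S, hS, by
          intro b hb; simp at hb; rcases hb with rfl | hb
          · exact hTS hxT
          · exact hBS hb⟩
  constructor
  · rintro a ⟨S, hS, haS⟩ ⟨B, hB, hBE, hatt⟩
    obtain ⟨T, hT, hBT⟩ := key B hBE
    rcases hc.total hS hT with hST | hTS
    · exact (hadm T hT).1 (hST haS) ⟨B, hB, hBT, hatt⟩
    · exact (hadm S hS).1 haS ⟨B, hB, hBT.trans hTS, hatt⟩
  · rintro a ⟨S, hS, haS⟩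
    exact gd_mono (subset_sUnion_of_mem hS) ((hadm S hS).2 haS)

end Aux

/-- If `n ≥ ℓ ≥ m`, then the ⊆-maximal ℓmn-complete extensions coincide with the
⊆-maximal ℓmn-admissible sets. -/
theorem preferred_eq_maximal_admissible {A : Type*} [Nonempty A]
    (att : A → A → Prop)
    (ℓ m n : ℕ) (hℓ : 0 < ℓ) (hm : 0 < m) (hn : 0 < n)
    (hml : m ≤ ℓ) (hln : ℓ ≤ n)
    (E : Set A) :
    (IsCompleteExt att ℓ m n E ∧
      ∀ E' : Set A, IsCompleteExt att ℓ m n E' → E ⊆ E' → E = E') ↔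
    (IsAdmissible att ℓ m n E ∧
      ∀ E' : Set A, IsAdmissible att ℓ m n E' → E ⊆ E' → E = E') := by
  constructor
  · rintro ⟨hEc, hmax⟩
    have hEadm : IsAdmissible att ℓ m n E := ⟨hEc.1, hEc.2.le⟩
    refine ⟨hEadm, fun E' hE' hEE' => ?_⟩
    -- extend E' to a maximal admissible set via Zorn
    obtain ⟨M, hE'M, hM⟩ := zorn_subset_nonempty {S | IsAdmissible att ℓ m n S}
      (fun c hcS hchain hcne =>
        ⟨⋃₀ c, chain_union_adm hchain hcne (fun S hS => hcS hS),
          fun s hs => subset_sUnion_of_mem hs⟩) E' hE'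
    have hMc : IsCompleteExt att ℓ m n M :=
      max_adm_complete hml hln hM.1 (fun S hS hMS => hMS.antisymm (hM.2 hS hMS))
    have hEM : E = M := hmax M hMc (hEE'.trans hE'M)
    exact hEE'.antisymm (hEM ▸ hE'M)
  · rintro ⟨hEadm, hmax⟩
    refine ⟨max_adm_complete hml hln hEadm hmax, fun E' hE' hEE' => ?_⟩
    exact hmax E' ⟨hE'.1, hE'.2.le⟩ hEE'
end

section
/- Characterization of least stable extensions: Let F = ⟨A, →⟩ be an AAF with ℓ ≥ m, let E ⊆ A be ℓmn-admissible, and let L be the least fixed point of D_n^m containing E (which exists since D_n^m is monotone and E ⊆ D_n^m(E)). Then L is the ⊆-least ℓmn-stable extension of F containing E (i.e., L is an ℓmn-stable extension, E ⊆ L, and L ⊆ E′ for every ℓmn-stable extension E′ with E ⊆ E′) if and only if L = N_n(L). -/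
open Set

variable {A : Type*}

lemma neutrality_mono_idx (att : A → A → Prop) {m ℓ : ℕ} (h : m ≤ ℓ) (E : Set A) :
    gradedNeutrality att m E ⊆ gradedNeutrality att ℓ E := by
  intro a ha hex
  obtain ⟨B, hB, hBE, hatt⟩ := hex
  obtain ⟨B', hB'B, hB'⟩ := Finset.exists_subset_card_eq (s := B) (n := m) (hB ▸ h)
  exact ha ⟨B', hB', fun x hx => hBE (hB'B hx), fun b hb => hatt b (hB'B hb)⟩

/-- Characterization of least stable extensions: if `ℓ ≥ m`, `E` is ℓmn-admissible and
`L` is the least fixed point of `D_n^m` containing `E`, then `L` is the ⊆-least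
ℓmn-stable extension containing `E` iff `L = N_n(L)`. -/
theorem least_stable_iff_neutrality_fixed {A : Type*} [Nonempty A]
    (att : A → A → Prop)
    (ℓ m n : ℕ) (hℓ : 0 < ℓ) (hm : 0 < m) (hn : 0 < n)
    (hml : m ≤ ℓ)
    (E L : Set A)
    (hE : IsAdmissible att ℓ m n E)
    (hL : IsLfpOver (gradedDefense att m n) E L) :
    (IsStableExt att ℓ m n L ∧ E ⊆ L ∧
      ∀ E' : Set A, IsStableExt att ℓ m n E' → E ⊆ E' → L ⊆ E') ↔
    L = gradedNeutrality att n L := by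
  obtain ⟨hfix, hEL, hleast⟩ := hL
  constructor
  · rintro ⟨⟨h1, _, _⟩, _⟩
    exact h1
  · intro hLn
    have hLm : L = gradedNeutrality att m L := by
      have : gradedDefense att m n L = gradedNeutrality att m L := by
        unfold gradedDefense; rw [← hLn]
      rw [← this, hfix]
    refine ⟨⟨hLn, hLm, ?_⟩, hEL, ?_⟩
    · rw [hLm]; exact hLm ▸ neutrality_mono_idx att hml L
    · intro E' ⟨hn', hm', _⟩ hEE'
      apply hleast
      · show gradedNeutrality att m (gradedNeutrality att n E') = E'
        rw [← hn', ← hm']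
      · exact hEE'
end

section
/- Local well-foundedness lemma: Let F = ⟨A, →⟩ be an AAF and X ⊆ A with D_n^m(X) ⊆ X. Suppose the transitive closure →⁺ of the attack relation is well-founded on A ∖ X. Then (a) for every a ∈ A ∖ X there is no Y ⊆ A with Y ⊆ D_n^m(Y) and X ∪ {a} ⊆ Y; (b) every Y ⊆ A with Y ⊆ D_n^m(Y) and X ⊆ Y satisfies Y = X; and (c) if moreover X = D_n^m(X), then X is the greatest fixed point of D_n^m, i.e., every Z ⊆ A with Z ⊆ D_n^m(Z) satisfies Z ⊆ X. -/
open Set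

variable {A : Type*}

/-- Local well-foundedness lemma: suppose `D_n^m(X) ⊆ X` and the transitive closure of
the attack relation is well-founded on `A ∖ X`. Then (a) no self-defended set contains
`X ∪ {a}` for `a ∉ X`; (b) every self-defended superset of `X` equals `X`; (c) if `X` is
a fixed point of `D_n^m` then it is the greatest fixed point. -/
theorem local_well_founded_lemma {A : Type*} [Nonempty A] (att : A → A → Prop)
    (m n : ℕ) (hm : 0 < m) (hn : 0 < n)
    (X : Set A)
    (hX : gradedDefense att m n X ⊆ X)
    (hwf : WellFoundedOnSet (Relation.TransGen att) (univ \ X)) :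
    (∀ a ∈ univ \ X,
      ¬ ∃ Y : Set A, Y ⊆ gradedDefense att m n Y ∧ X ∪ {a} ⊆ Y) ∧
    (∀ Y : Set A, Y ⊆ gradedDefense att m n Y → X ⊆ Y → Y = X) ∧
    (X = gradedDefense att m n X →
      ∀ Z : Set A, Z ⊆ gradedDefense att m n Z → Z ⊆ X) := by
  -- monotonicity of graded defense
  have mono : ∀ E E' : Set A, E ⊆ E' →
      gradedDefense att m n E ⊆ gradedDefense att m n E' := by
    intro E E' hEE' a ha hcon
    obtain ⟨B, hBcard, hBsub, hBatt⟩ := hcon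
    refine ha ⟨B, hBcard, ?_, hBatt⟩
    intro b hb hcon'
    obtain ⟨C, hCcard, hCsub, hCatt⟩ := hcon'
    exact hBsub hb ⟨C, hCcard, fun c hc => hEE' (hCsub hc), hCatt⟩
  -- key step: from an element of Y \ X find an attacker chain back into Y \ X
  have key : ∀ Y : Set A, Y ⊆ gradedDefense att m n Y → X ⊆ Y →
      ∀ a ∈ Y, a ∉ X → ∃ c, c ∈ Y ∧ c ∉ X ∧ Relation.TransGen att c a := by
    intro Y hY hXY a haY haX
    have haD : a ∈ gradedDefense att m n Y := hY haY
    have haDX : a ∉ gradedDefense att m n X := fun h => haX (hX h)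
    have hex : ∃ B : Finset A, B.card = m ∧
        (↑B : Set A) ⊆ gradedNeutrality att n X ∧ ∀ b ∈ B, att b a :=
      not_not.mp haDX
    obtain ⟨B, hBcard, hBsub, hBatt⟩ := hex
    have hBnotY : ¬ (↑B : Set A) ⊆ gradedNeutrality att n Y := by
      intro h; exact haD ⟨B, hBcard, h, hBatt⟩
    obtain ⟨b, hbB, hbn⟩ := not_subset.mp hBnotY
    have hex2 : ∃ C : Finset A, C.card = n ∧
        (↑C : Set A) ⊆ Y ∧ ∀ c ∈ C, att c b := not_not.mp hbn
    obtain ⟨C, hCcard, hCsub, hCatt⟩ := hex2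
    have hbNX : b ∈ gradedNeutrality att n X := hBsub hbB
    have hCnotX : ¬ (↑C : Set A) ⊆ X := by
      intro h; exact hbNX ⟨C, hCcard, h, hCatt⟩
    obtain ⟨c, hcC, hcX⟩ := not_subset.mp hCnotX
    exact ⟨c, hCsub hcC, hcX,
      Relation.TransGen.head (hCatt c hcC)
        (Relation.TransGen.single (hBatt b hbB))⟩
  -- main: any self-defended superset of X is contained in X
  have main : ∀ Y : Set A, Y ⊆ gradedDefense att m n Y → X ⊆ Y → Y ⊆ X := by
    intro Y hY hXY
    by_contra h
    obtain ⟨a, haY, haX⟩ := not_subset.mp h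
    have step : ∀ x : {x : A // x ∈ Y ∧ x ∉ X},
        ∃ y : {x : A // x ∈ Y ∧ x ∉ X}, Relation.TransGen att y.1 x.1 := by
      rintro ⟨x, hxY, hxX⟩
      obtain ⟨c, h1, h2, h3⟩ := key Y hY hXY x hxY hxX
      exact ⟨⟨c, h1, h2⟩, h3⟩
    choose g hg using step
    refine hwf ⟨fun i => (g^[i] ⟨a, haY, haX⟩).1,
      fun i => ⟨trivial, (g^[i] ⟨a, haY, haX⟩).2.2⟩, fun i => ?_⟩
    show Relation.TransGen att ((g^[i+1] ⟨a, haY, haX⟩ : _)).1 _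
    rw [Function.iterate_succ_apply']
    exact hg _
  refine ⟨?_, ?_, ?_⟩
  · rintro a ⟨-, haX⟩ ⟨Y, hY, hXaY⟩
    have hXY : X ⊆ Y := (union_subset_iff.mp hXaY).1
    have haY : a ∈ Y := hXaY (Or.inr rfl)
    exact haX (main Y hY hXY haY)
  · intro Y hY hXY
    exact Subset.antisymm (main Y hY hXY) hXY
  · intro hfix Z hZ
    have h1 : X ∪ Z ⊆ gradedDefense att m n (X ∪ Z) := by
      refine union_subset ?_ ?_
      · exact (hfix ▸ subset_rfl : X ⊆ gradedDefense att m n X).trans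
          (mono X (X ∪ Z) subset_union_left)
      · exact hZ.trans (mono Z (X ∪ Z) subset_union_right)
    have := main (X ∪ Z) h1 subset_union_left
    exact subset_union_right.trans this
end

section
/- Let F = ⟨A, →⟩ be an AAF and let G be the least fixed point of the monotone function D_n^m on 𝒫(A). Suppose the transitive closure →⁺ of the attack relation is well-founded on A ∖ G. Then (a) G is the unique fixed point of D_n^m, and for every X ⊆ A with X ⊆ D_n^m(X) the least fixed point of D_n^m containing X equals G; and (b) if moreover ℓ ≥ m and n ≥ m, then G is the unique ℓmn-complete extension of F. -/
open Set

variable {A : Type*}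

lemma gradedNeutrality_antitone (att : A → A → Prop) (k : ℕ) :
    Antitone (gradedNeutrality att k) := by
  intro E F h a ha hex
  exact ha ⟨hex.choose, hex.choose_spec.1, hex.choose_spec.2.1.trans h,
    hex.choose_spec.2.2⟩

lemma gradedDefense_monotone (att : A → A → Prop) (m n : ℕ) :
    Monotone (gradedDefense att m n) := fun _ _ h =>
  gradedNeutrality_antitone att m (gradedNeutrality_antitone att n h)

lemma gradedNeutrality_mono_index (att : A → A → Prop) {k l : ℕ} (hkl : k ≤ l)
    (E : Set A) : gradedNeutrality att k E ⊆ gradedNeutrality att l E := by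
  intro a ha ⟨B, hB, hsub, hatt⟩
  obtain ⟨B', hB'sub, hB'card⟩ := Finset.exists_subset_card_eq (hB ▸ hkl)
  exact ha ⟨B', hB'card, fun x hx => hsub (hB'sub hx),
    fun b hb => hatt b (hB'sub hb)⟩

/-- Step lemma: from an element of a fixed point `X` outside `G`, produce an
attacker (in the transitive closure) in `X` outside `G`. -/
lemma exists_step (att : A → A → Prop) (m n : ℕ) (G X : Set A)
    (hGfix : gradedDefense att m n G = G) (hXfix : gradedDefense att m n X = X)
    (hGX : G ⊆ X) {a : A} (ha : a ∈ X \ G) :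
    ∃ c, c ∈ X \ G ∧ Relation.TransGen att c a := by
  obtain ⟨haX, haG⟩ := ha
  have h1 : a ∉ gradedDefense att m n G := by rw [hGfix]; exact haG
  have h1' : ∃ B : Finset A, B.card = m ∧
      (↑B : Set A) ⊆ gradedNeutrality att n G ∧ ∀ b ∈ B, att b a := by
    by_contra hc; exact h1 hc
  obtain ⟨B, hBcard, hBsub, hBatt⟩ := h1'
  have h2 : a ∈ gradedDefense att m n X := by rw [hXfix]; exact haX
  have hnot : ¬ (↑B : Set A) ⊆ gradedNeutrality att n X := fun hc =>
    h2 ⟨B, hBcard, hc, hBatt⟩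
  obtain ⟨b, hbB, hbN⟩ : ∃ b ∈ B, b ∉ gradedNeutrality att n X := by
    by_contra hc
    push_neg at hc
    exact hnot fun x hx => hc x hx
  have hbG : b ∈ gradedNeutrality att n G := hBsub hbB
  have hb' : ∃ C : Finset A, C.card = n ∧ (↑C : Set A) ⊆ X ∧ ∀ c ∈ C, att c b := by
    by_contra hc; exact hbN hc
  obtain ⟨C, hCcard, hCsub, hCatt⟩ := hb'
  have : ¬ (↑C : Set A) ⊆ G := fun hc => hbG ⟨C, hCcard, hc, hCatt⟩
  obtain ⟨c, hcC, hcG⟩ : ∃ c ∈ C, c ∉ G := by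
    by_contra hc; push_neg at hc; exact this fun x hx => hc x hx
  exact ⟨c, ⟨hCsub hcC, hcG⟩,
    Relation.TransGen.head (hCatt c hcC) (Relation.TransGen.single (hBatt b hbB))⟩

lemma fixed_eq_of_wf (att : A → A → Prop) (m n : ℕ) (G : Set A)
    (hG : gradedDefense att m n G = G ∧
      ∀ L : Set A, gradedDefense att m n L = L → G ⊆ L)
    (hwf : WellFoundedOnSet (Relation.TransGen att) (univ \ G))
    (X : Set A) (hX : gradedDefense att m n X = X) : X = G := by
  have hGX : G ⊆ X := hG.2 X hX
  by_contra hne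
  obtain ⟨a₀, ha₀X, ha₀G⟩ := Set.exists_of_ssubset (hGX.ssubset_of_ne (Ne.symm hne))
  have ha₀ : a₀ ∈ X \ G := ⟨ha₀X, ha₀G⟩
  have key : ∀ a : ↥(X \ G), ∃ c : ↥(X \ G), Relation.TransGen att ↑c ↑a :=
    fun a => by
      obtain ⟨c, hc, ht⟩ := exists_step att m n G X hG.1 hX hGX a.2
      exact ⟨⟨c, hc⟩, ht⟩
  choose g hg using key
  refine hwf ⟨fun i => ↑(g^[i] ⟨a₀, ha₀⟩), fun i => ⟨trivial, (g^[i] ⟨a₀, ha₀⟩).2.2⟩,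
    fun i => ?_⟩
  show Relation.TransGen att ↑(g^[i + 1] ⟨a₀, ha₀⟩) ↑(g^[i] ⟨a₀, ha₀⟩)
  rw [Function.iterate_succ_apply']
  exact hg _

/-- If `G` is the least fixed point of `D_n^m` and the transitive closure of the attack
relation is well-founded on `A ∖ G`, then (a) `G` is the unique fixed point of `D_n^m`
and the least fixed point of `D_n^m` over any self-defended set equals `G`; and (b) if
moreover `ℓ ≥ m` and `n ≥ m`, then `G` is the unique ℓmn-complete extension. -/
theorem unique_fixed_point_of_wellFounded {A : Type*} [Nonempty A]
    (att : A → A → Prop)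
    (ℓ m n : ℕ) (hℓ : 0 < ℓ) (hm : 0 < m) (hn : 0 < n)
    (G : Set A)
    (hG : gradedDefense att m n G = G ∧
      ∀ L : Set A, gradedDefense att m n L = L → G ⊆ L)
    (hwf : WellFoundedOnSet (Relation.TransGen att) (univ \ G)) :
    ((∀ X : Set A, gradedDefense att m n X = X → X = G) ∧
     (∀ X L : Set A, X ⊆ gradedDefense att m n X →
        IsLfpOver (gradedDefense att m n) X L → L = G)) ∧
    (m ≤ ℓ → m ≤ n →
      IsCompleteExt att ℓ m n G ∧
        ∀ E : Set A, IsCompleteExt att ℓ m n E → E = G) := by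
  classical
  have Dfix : gradedDefense att m n G = G := hG.1
  have huniq : ∀ X : Set A, gradedDefense att m n X = X → X = G :=
    fixed_eq_of_wf att m n G hG hwf
  refine ⟨⟨huniq, fun X L _ hL => huniq L hL.1⟩, fun hmℓ hmn => ?_⟩
  -- part (b)
  have Dmono : Monotone (gradedDefense att m n) := gradedDefense_monotone att m n
  have hpre : ∀ L : Set A, gradedDefense att m n L ⊆ L → G ⊆ L := by
    intro L hL
    set f : Set A →o Set A := ⟨gradedDefense att m n, Dmono⟩ with hf
    have hlfp : gradedDefense att m n (OrderHom.lfp f) = OrderHom.lfp f :=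
      f.map_lfp
    exact (hG.2 _ hlfp).trans (OrderHom.lfp_le f hL)
  -- G ⊆ N_n G
  have hcfn : G ⊆ gradedNeutrality att n G := by
    have hLpre : gradedDefense att m n (G ∩ gradedNeutrality att n G) ⊆
        G ∩ gradedNeutrality att n G := by
      intro a haD
      have haG : a ∈ G := by rw [← Dfix]; exact Dmono inter_subset_left haD
      refine ⟨haG, ?_⟩
      intro ⟨C, hCcard, hCsub, hCatt⟩
      have hCN : (↑C : Set A) ⊆
          gradedNeutrality att n (G ∩ gradedNeutrality att n G) := by
        intro c hcC
        intro ⟨C', hC'card, hC'sub, hC'att⟩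
        obtain ⟨B', hB'sub, hB'card⟩ := Finset.exists_subset_card_eq (hC'card ▸ hmn)
        have hcG : c ∈ G := hCsub hcC
        have : c ∈ gradedDefense att m n G := by rw [Dfix]; exact hcG
        exact this ⟨B', hB'card,
          fun x hx => (hC'sub (hB'sub hx)).2,
          fun b hb => hC'att b (hB'sub hb)⟩
      obtain ⟨B, hBsub, hBcard⟩ := Finset.exists_subset_card_eq (hCcard ▸ hmn)
      exact haD ⟨B, hBcard, fun x hx => hCN (hBsub hx),
        fun b hb => hCatt b (hBsub hb)⟩
    exact (subset_inter_iff.mp (hpre _ hLpre)).2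
  have hcfm : G ⊆ gradedNeutrality att m G := by
    intro a ha
    have : a ∈ gradedDefense att m n G := by rw [Dfix]; exact ha
    exact gradedNeutrality_antitone att m hcfn this
  have hcf : G ⊆ gradedNeutrality att ℓ G :=
    hcfm.trans (gradedNeutrality_mono_index att hmℓ G)
  refine ⟨⟨hcf, Dfix.symm⟩, fun E hE => huniq E hE.2.symm⟩
end

section
/- Let F = ⟨A, →⟩ be an AAF and ℓ, m, n positive integers with ℓ ≤ m or ℓ ≤ n. Then every ℓmn-stable extension of F is an ℓmn-preferred extension of F, i.e., a ⊆-maximal ℓmn-complete extension. -/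
open Set

variable {A : Type*}

/-- If `ℓ ≤ m` or `ℓ ≤ n`, then every ℓmn-stable extension is an ℓmn-preferred
extension, i.e. a ⊆-maximal ℓmn-complete extension. -/
theorem stable_subset_preferred {A : Type*} [Nonempty A] (att : A → A → Prop)
    (ℓ m n : ℕ) (hℓ : 0 < ℓ) (hm : 0 < m) (hn : 0 < n)
    (h : ℓ ≤ m ∨ ℓ ≤ n)
    (E : Set A) (hE : IsStableExt att ℓ m n E) :
    IsCompleteExt att ℓ m n E ∧
      ∀ E' : Set A, IsCompleteExt att ℓ m n E' → E ⊆ E' → E = E' := by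
  obtain ⟨hn', hm', hcf⟩ := hE
  have key : ∀ η, ℓ ≤ η → E = gradedNeutrality att η E →
      ∀ E' : Set A, IsCompleteExt att ℓ m n E' → E ⊆ E' → E = E' := by
    intro η hle hfix E' ⟨hcf', _⟩ hsub
    refine Set.Subset.antisymm hsub fun a ha => ?_
    by_contra haE
    rw [hfix] at haE
    simp only [gradedNeutrality, Set.mem_setOf_eq, not_not] at haE
    obtain ⟨B, hBcard, hBE, hBatt⟩ := haE
    obtain ⟨C, hCB, hCcard⟩ := Finset.exists_subset_card_eq (s := B) (n := ℓ) (hBcard ▸ hle)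
    have : a ∈ gradedNeutrality att ℓ E' := hcf' ha
    exact this ⟨C, hCcard, fun x hx => hsub (hBE (hCB hx)), fun b hb => hBatt b (hCB hb)⟩
  have hcomp : IsCompleteExt att ℓ m n E := by
    refine ⟨hcf, ?_⟩
    unfold gradedDefense
    rw [← hn', ← hm']
  refine ⟨hcomp, ?_⟩
  rcases h with hle | hle
  · exact key m hle hm'
  · exact key n hle hn'
end

section
/- Let F = ⟨A, →⟩ be an AAF and ℓ, m, n, η positive integers with η ≤ n or η ≤ m. Then the ℓmn-stable extensions of F coincide with the ℓmn-η-range-related stable extensions of F, and every ℓmn-stable extension is simultaneously an ℓ-η-stage extension, an ℓmn-η-range-related admissible set, and an ℓmn-η-semi-stable extension of F (indeed E ∪ E_η^+ = A for every ℓmn-stable extension E). -/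
open Set

variable {A : Type*}

lemma stable_range_univ {A : Type*} (att : A → A → Prop) {ℓ m n η : ℕ}
    (h : η ≤ n ∨ η ≤ m) {E : Set A} (hE : IsStableExt att ℓ m n E) :
    rangeOf att η E = univ := by
  ext a
  simp only [mem_univ, iff_true]
  by_cases ha : a ∈ E
  · exact Or.inl ha
  right
  obtain ⟨hn', hm', _⟩ := hE
  have key : ∀ k : ℕ, η ≤ k → E = gradedNeutrality att k E → a ∈ rangePlus att η E := by
    intro k hk heq
    have : a ∉ gradedNeutrality att k E := heq ▸ ha
    simp only [gradedNeutrality, mem_setOf_eq, not_not] at this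
    obtain ⟨B, hB, hBE, hatt⟩ := this
    obtain ⟨C, hCB, hC⟩ := Finset.exists_subset_card_eq (hB ▸ hk : η ≤ B.card)
    exact ⟨C, hC, fun x hx => hBE (Finset.coe_subset.mpr hCB hx),
      fun b hb => hatt b (hCB hb)⟩
  rcases h with h | h
  · exact key n h hn'
  · exact key m h hm'

/-- If `η ≤ n` or `η ≤ m`, then the ℓmn-stable extensions coincide with the
ℓmn-η-range-related stable extensions, and every ℓmn-stable extension is an ℓ-η-stage
extension, an ℓmn-η-range-related admissible set and an ℓmn-η-semi-stable extension;
indeed its range is all of `A`. -/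
theorem stable_range_related {A : Type*} [Nonempty A] (att : A → A → Prop)
    (ℓ m n η : ℕ) (hℓ : 0 < ℓ) (hm : 0 < m) (hn : 0 < n) (hη : 0 < η)
    (h : η ≤ n ∨ η ≤ m) :
    (∀ E : Set A, IsStableExt att ℓ m n E ↔
      (IsStableExt att ℓ m n E ∧
        ¬ ∃ E' : Set A, IsStableExt att ℓ m n E' ∧
          rangeOf att η E ⊂ rangeOf att η E')) ∧
    (∀ E : Set A, IsStableExt att ℓ m n E →
      ((IsConflictFree att ℓ E ∧
          ¬ ∃ E' : Set A, IsConflictFree att ℓ E' ∧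
            rangeOf att η E ⊂ rangeOf att η E') ∧
       (IsAdmissible att ℓ m n E ∧
          ¬ ∃ E' : Set A, IsAdmissible att ℓ m n E' ∧
            rangeOf att η E ⊂ rangeOf att η E') ∧
       (IsCompleteExt att ℓ m n E ∧
          ¬ ∃ E' : Set A, IsCompleteExt att ℓ m n E' ∧
            rangeOf att η E ⊂ rangeOf att η E') ∧
       E ∪ rangePlus att η E = univ)) := by
  have main : ∀ E : Set A, IsStableExt att ℓ m n E → rangeOf att η E = univ :=
    fun E hE => stable_range_univ att h hE
  have nomax : ∀ E : Set A, IsStableExt att ℓ m n E →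
      ∀ E' : Set A, ¬ rangeOf att η E ⊂ rangeOf att η E' := by
    intro E hE E' hss
    rw [main E hE] at hss
    exact (not_ssubset_of_subset (subset_univ _)) hss
  constructor
  · intro E
    constructor
    · intro hE
      exact ⟨hE, fun ⟨E', _, hss⟩ => nomax E hE E' hss⟩
    · exact fun h => h.1
  · intro E hE
    have hcf : IsConflictFree att ℓ E := hE.2.2
    have hadm : IsAdmissible att ℓ m n E := by
      refine ⟨hE.2.2, ?_⟩
      have : gradedDefense att m n E = E := by
        unfold gradedDefense
        rw [← hE.1, ← hE.2.1]
      rw [this]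
    have hcomp : IsCompleteExt att ℓ m n E := by
      refine ⟨hE.2.2, ?_⟩
      unfold gradedDefense
      rw [← hE.1, ← hE.2.1]
    exact ⟨⟨hcf, fun ⟨E', _, hss⟩ => nomax E hE E' hss⟩,
      ⟨hadm, fun ⟨E', _, hss⟩ => nomax E hE E' hss⟩,
      ⟨hcomp, fun ⟨E', _, hss⟩ => nomax E hE E' hss⟩,
      main E hE⟩
end

section
/- Distributive laws over reduced meets: Let F = ⟨A, →⟩ be an AAF, I a nonempty set, D an ultrafilter over I, and E_i ⊆ A for each i ∈ I. Then (a) ⋂_D N_ℓ(E_i) ⊆ N_ℓ(⋂_D E_i); (b) if F is finitary, N_ℓ(⋂_D E_i) ⊆ ⋂_D N_ℓ(E_i), so N_ℓ(⋂_D E_i) = ⋂_D N_ℓ(E_i); and (c) if F is finitary, D_n^m(⋂_D E_i) = ⋂_D D_n^m(E_i). -/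
open Set

variable {A : Type*}

lemma aux_subset_mem {A : Type*} {I : Type*} (D : Ultrafilter I) (E : I → Set A)
    (B : Finset A) (h : (↑B : Set A) ⊆ reducedMeet D E) :
    {i | (↑B : Set A) ⊆ E i} ∈ D := by
  have : (⋂ b ∈ B, {i | b ∈ E i}) ∈ D :=
    (Filter.biInter_finset_mem B).2 (fun b hb => h (by exact_mod_cast hb))
  convert this using 1
  ext i; simp [Set.subset_def]

lemma aux_meet_subset {A : Type*} (att : A → A → Prop) (ℓ : ℕ)
    {I : Type*} (D : Ultrafilter I) (E : I → Set A) :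
    reducedMeet D (fun i => gradedNeutrality att ℓ (E i)) ⊆
      gradedNeutrality att ℓ (reducedMeet D E) := by
  intro a ha hB
  obtain ⟨B, hcard, hsub, hatt⟩ := hB
  have h1 : {i | (↑B : Set A) ⊆ E i} ∈ D := aux_subset_mem D E B hsub
  have h2 : ({i | (↑B : Set A) ⊆ E i} ∩ {i | a ∈ gradedNeutrality att ℓ (E i)}) ∈ D :=
    Filter.inter_mem h1 ha
  obtain ⟨i, hi1, hi2⟩ := Ultrafilter.nonempty_of_mem h2
  exact hi2 ⟨B, hcard, hi1, hatt⟩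

lemma aux_neutral_eq {A : Type*} (att : A → A → Prop) (ℓ : ℕ)
    {I : Type*} (D : Ultrafilter I) (E : I → Set A) (hfin : IsFinitary att) :
    gradedNeutrality att ℓ (reducedMeet D E) =
      reducedMeet D (fun i => gradedNeutrality att ℓ (E i)) := by
  apply Set.Subset.antisymm _ (aux_meet_subset att ℓ D E)
  intro a ha
  by_contra hna
  have hc : {i | a ∈ gradedNeutrality att ℓ (E i)}ᶜ ∈ D :=
    Ultrafilter.compl_mem_iff_notMem.2 hna
  set P : Finset (Finset A) := (hfin a).toFinset.powerset with hP
  have hsub : {i | a ∈ gradedNeutrality att ℓ (E i)}ᶜ ⊆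
      ⋃ B ∈ (↑P : Set (Finset A)),
        {i | B.card = ℓ ∧ (↑B : Set A) ⊆ E i ∧ ∀ b ∈ B, att b a} := by
    intro i hi
    simp only [Set.mem_compl_iff, Set.mem_setOf_eq, gradedNeutrality, not_not] at hi
    obtain ⟨B, hcard, hBE, hatt⟩ := hi
    refine Set.mem_biUnion ?_ ⟨hcard, hBE, hatt⟩
    simp only [hP, Finset.coe_powerset, Set.mem_preimage, Set.mem_powerset_iff,
      Set.Finite.coe_toFinset]
    intro b hb
    exact hatt b (by exact_mod_cast hb)
  have hU : (⋃ B ∈ (↑P : Set (Finset A)),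
      {i | B.card = ℓ ∧ (↑B : Set A) ⊆ E i ∧ ∀ b ∈ B, att b a}) ∈ D :=
    Filter.mem_of_superset hc hsub
  obtain ⟨B, _, hBD⟩ := (Ultrafilter.finite_biUnion_mem_iff P.finite_toSet).1 hU
  obtain ⟨i, hcard, _, hatt⟩ := Ultrafilter.nonempty_of_mem hBD
  have hBE : {i | (↑B : Set A) ⊆ E i} ∈ D :=
    Filter.mem_of_superset hBD (fun j hj => hj.2.1)
  refine ha ⟨B, hcard, ?_, hatt⟩
  intro b hb
  exact Filter.mem_of_superset hBE (fun j hj => hj (by exact_mod_cast hb))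

/-- Distributive laws of the neutrality and defense functions over reduced meets modulo
an ultrafilter; parts (b) and (c) require the AAF to be finitary. -/
theorem distributive_over_reducedMeet {A : Type*} [Nonempty A]
    (att : A → A → Prop)
    (ℓ m n : ℕ) (hℓ : 0 < ℓ) (hm : 0 < m) (hn : 0 < n)
    {I : Type*} [Nonempty I] (D : Ultrafilter I) (E : I → Set A) :
    (reducedMeet D (fun i => gradedNeutrality att ℓ (E i)) ⊆
      gradedNeutrality att ℓ (reducedMeet D E)) ∧
    (IsFinitary att →
      gradedNeutrality att ℓ (reducedMeet D E) =
        reducedMeet D (fun i => gradedNeutrality att ℓ (E i))) ∧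
    (IsFinitary att →
      gradedDefense att m n (reducedMeet D E) =
        reducedMeet D (fun i => gradedDefense att m n (E i))) := by
  refine ⟨aux_meet_subset att ℓ D E, fun hfin => aux_neutral_eq att ℓ D E hfin,
    fun hfin => ?_⟩
  show gradedNeutrality att m (gradedNeutrality att n (reducedMeet D E)) = _
  rw [aux_neutral_eq att n D E hfin, aux_neutral_eq att m D _ hfin]
  rfl
end

section
/- Upper bounds of range chains via reduced meets: Let F = ⟨A, →⟩ be a finitary AAF, η a positive integer, I a nonempty set, and X_i ⊆ A for each i ∈ I such that the family {X_i : i ∈ I} is a chain with respect to the preorder ∝ (i.e., for all i, j ∈ I, X_i ∪ (X_i)_η^+ ⊆ X_j ∪ (X_j)_η^+ or X_j ∪ (X_j)_η^+ ⊆ X_i ∪ (X_i)_η^+). Then there exists an ultrafilter D over I such that X_j ∪ (X_j)_η^+ ⊆ (⋂_D X_i) ∪ (⋂_D X_i)_η^+ for every j ∈ I, i.e., ⋂_D X_i is an upper bound of the family with respect to ∝. -/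
open Set

variable {A : Type*}

/-- Upper bounds of range chains via reduced meets: if `F` is finitary and the family
`X` is a chain with respect to the range preorder `∝`, then there is an ultrafilter `D`
such that the reduced meet `⋂_D X_i` is a `∝`-upper bound of the family. -/
theorem reducedMeet_upper_bound_of_chain {A : Type*} [Nonempty A]
    (att : A → A → Prop) (hfin : IsFinitary att)
    (η : ℕ) (hη : 0 < η)
    {I : Type*} [Nonempty I] (X : I → Set A)
    (hchain : ∀ i j : I,
      rangeOf att η (X i) ⊆ rangeOf att η (X j) ∨
        rangeOf att η (X j) ⊆ rangeOf att η (X i)) :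
    ∃ D : Ultrafilter I, ∀ j : I,
      rangeOf att η (X j) ⊆ rangeOf att η (reducedMeet D X) := by
  classical
  set R : I → Set A := fun i => rangeOf att η (X i) with hR
  set S : I → Set I := fun j => {i | R j ⊆ R i} with hS
  -- the filter generated by the sets `S j` is proper
  have hdir : Directed (· ≥ ·) (fun j => Filter.principal (S j)) := by
    intro j k
    rcases hchain j k with h | h
    · exact ⟨k, Filter.principal_mono.2 (fun i hi => h.trans hi),
        Filter.principal_mono.2 (fun i hi => hi)⟩
    · exact ⟨j, Filter.principal_mono.2 (fun i hi => hi),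
        Filter.principal_mono.2 (fun i hi => h.trans hi)⟩
  have hne : ∀ j, (Filter.principal (S j)).NeBot := by
    intro j
    exact Filter.principal_neBot_iff.2 ⟨j, fun a ha => ha⟩
  have hF : (⨅ j, Filter.principal (S j)).NeBot := Filter.iInf_neBot_of_directed hdir hne
  obtain ⟨D, hD⟩ := Ultrafilter.exists_le (⨅ j, Filter.principal (S j))
  refine ⟨D, fun j a ha => ?_⟩
  have hSj : S j ∈ D :=
    hD (Filter.le_principal_iff.1 (iInf_le (fun j => Filter.principal (S j)) j))
  by_cases hmem : {i | a ∈ X i} ∈ D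
  · exact Or.inl hmem
  · -- on a D-large set, `a` is in the η-range-plus of `X i`
    have hT : (S j ∩ {i | a ∈ rangePlus att η (X i)}) ∈ D := by
      have h2 : {i | a ∉ X i} ∈ D := (D.compl_mem_iff_notMem).2 hmem
      have : S j ∩ {i | a ∉ X i} ⊆ S j ∩ {i | a ∈ rangePlus att η (X i)} := by
        rintro i ⟨hi1, hi2⟩
        refine ⟨hi1, ?_⟩
        rcases hi1 ha with h | h
        · exact absurd h hi2
        · exact h
      exact D.sets_of_superset (D.inter_sets hSj h2) this
    -- choice of witnessing finsets
    set g : I → Finset A := fun i =>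
      if h : a ∈ rangePlus att η (X i) then h.choose else ∅ with hg
    have hgspec : ∀ i ∈ (S j ∩ {i | a ∈ rangePlus att η (X i)}),
        (g i).card = η ∧ (↑(g i) : Set A) ⊆ X i ∧ ∀ b ∈ g i, att b a := by
      intro i hi
      have h := hi.2
      have hgi : g i = h.choose := dif_pos h
      rw [hgi]
      exact h.choose_spec
    -- the witnessing finsets live in a finite collection
    have hatt : {b | att b a}.Finite := hfin a
    set V : Finset (Finset A) := hatt.toFinset.powerset with hV
    have hcover : (S j ∩ {i | a ∈ rangePlus att η (X i)}) ⊆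
        ⋃ B ∈ (↑V : Set (Finset A)), {i | g i = B ∧ i ∈ S j ∩ {i | a ∈ rangePlus att η (X i)}} := by
      intro i hi
      have hspec := hgspec i hi
      have : g i ∈ V := by
        simp only [hV, Finset.mem_powerset]
        intro b hb
        exact hatt.mem_toFinset.2 (hspec.2.2 b hb)
      exact Set.mem_biUnion this ⟨rfl, hi⟩
    have hU : (⋃ B ∈ (↑V : Set (Finset A)),
        {i | g i = B ∧ i ∈ S j ∩ {i | a ∈ rangePlus att η (X i)}}) ∈ D :=
      D.sets_of_superset hT hcover
    obtain ⟨B, _, hBmem⟩ := (Ultrafilter.finite_biUnion_mem_iff V.finite_toSet).1 hU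
    -- every element of B is in the reduced meet
    obtain ⟨i₀, hi₀⟩ := D.nonempty_of_mem hBmem
    have hspec₀ := hgspec i₀ hi₀.2
    rw [hi₀.1] at hspec₀
    refine Or.inr ⟨B, hspec₀.1, ?_, hspec₀.2.2⟩
    intro b hb
    refine D.sets_of_superset hBmem ?_
    rintro i ⟨hgi, hi⟩
    have := (hgspec i hi).2.1
    rw [hgi] at this
    exact this hb
end

section
/- Closure of the fundamental semantics under reduced meets: Let F = ⟨A, →⟩ be a finitary AAF, I a nonempty set, D an ultrafilter over I, and E_i ⊆ A for each i ∈ I. Then (a) if {i ∈ I : E_i ⊆ N_ℓ(E_i)} ∈ D then ⋂_D E_i ⊆ N_ℓ(⋂_D E_i) (this part does not require finitariness); (b) if {i ∈ I : N_ℓ(E_i) ⊆ E_i} ∈ D then N_ℓ(⋂_D E_i) ⊆ ⋂_D E_i; (c) if {i ∈ I : E_i ⊆ D_n^m(E_i)} ∈ D then ⋂_D E_i ⊆ D_n^m(⋂_D E_i); (d) if {i ∈ I : D_n^m(E_i) ⊆ E_i} ∈ D then D_n^m(⋂_D E_i) ⊆ ⋂_D E_i. Consequently, if the set of indices i such that E_i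 is ℓ-conflict-free (respectively mn-self-defended, ℓmn-admissible, ℓmn-complete, ℓmn-stable) belongs to D, then ⋂_D E_i is ℓ-conflict-free (respectively mn-self-defended, ℓmn-admissible, ℓmn-complete, ℓmn-stable). -/
open Set

variable {A : Type*}

section Aux

open Filter

variable {I : Type*}

lemma reducedMeet_mono (D : Ultrafilter I) {X Y : I → Set A}
    (h : {i | X i ⊆ Y i} ∈ D) : reducedMeet D X ⊆ reducedMeet D Y := by
  intro a ha
  exact D.toFilter.mp_mem ha (Filter.mem_of_superset h fun i hi hai => hi hai)

lemma reducedMeet_congr (D : Ultrafilter I) {X Y : I → Set A}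
    (h : {i | X i = Y i} ∈ D) : reducedMeet D X = reducedMeet D Y := by
  apply Set.Subset.antisymm
  · exact reducedMeet_mono D (Filter.mem_of_superset h fun i hi => hi.le)
  · exact reducedMeet_mono D (Filter.mem_of_superset h fun i hi => hi.ge)

lemma finset_subset_reducedMeet (D : Ultrafilter I) {X : I → Set A}
    {B : Finset A} (h : (↑B : Set A) ⊆ reducedMeet D X) :
    {i | (↑B : Set A) ⊆ X i} ∈ D := by
  have h2 : ∀ b ∈ B, {i | b ∈ X i} ∈ D := fun b hb => h (by exact_mod_cast hb)
  have h3 : {i | ∀ b ∈ B, b ∈ X i} ∈ D := (Filter.eventually_all_finset B).2 h2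
  exact Filter.mem_of_superset h3 fun i hi b hb => hi b (by exact_mod_cast hb)

lemma gradedNeutrality_reducedMeet (att : A → A → Prop) (hfin : IsFinitary att)
    (ℓ : ℕ) (D : Ultrafilter I) (E : I → Set A) :
    gradedNeutrality att ℓ (reducedMeet D E)
      = reducedMeet D (fun i => gradedNeutrality att ℓ (E i)) := by
  classical
  ext a
  constructor
  · intro ha
    by_contra hc
    have hT : {i | a ∉ gradedNeutrality att ℓ (E i)} ∈ D := by
      have := (D.compl_mem_iff_notMem (s := {i | a ∈ gradedNeutrality att ℓ (E i)})).2 hc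
      exact this
    set S : Finset A := (hfin a).toFinset with hS
    set g : I → Finset A := fun i =>
      if h : ∃ B : Finset A, B.card = ℓ ∧ (↑B : Set A) ⊆ E i ∧ ∀ b ∈ B, att b a
      then h.choose else ∅ with hg
    have hgspec : ∀ i ∈ {i | a ∉ gradedNeutrality att ℓ (E i)},
        (g i).card = ℓ ∧ (↑(g i) : Set A) ⊆ E i ∧ ∀ b ∈ g i, att b a := by
      intro i hi
      have hex : ∃ B : Finset A, B.card = ℓ ∧ (↑B : Set A) ⊆ E i ∧ ∀ b ∈ B, att b a :=
        not_not.mp hi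
      simp only [hg, dif_pos hex]
      exact hex.choose_spec
    have hcover : {i | a ∉ gradedNeutrality att ℓ (E i)} ⊆
        ⋃ B ∈ (S.powerset : Finset (Finset A)), {i | a ∉ gradedNeutrality att ℓ (E i) ∧ g i = B} := by
      intro i hi
      have hspec := hgspec i hi
      have hmem : g i ∈ S.powerset := by
        rw [Finset.mem_powerset]
        intro b hb
        simp only [hS, Set.Finite.mem_toFinset]
        exact hspec.2.2 b hb
      exact Set.mem_biUnion hmem ⟨hi, rfl⟩
    have hU : (⋃ B ∈ (S.powerset : Finset (Finset A)),
        {i | a ∉ gradedNeutrality att ℓ (E i) ∧ g i = B}) ∈ D :=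
      Filter.mem_of_superset hT hcover
    obtain ⟨B, _, hBmem⟩ := (Ultrafilter.finite_biUnion_mem_iff (S.powerset).finite_toSet).mp
      (by simpa using hU)
    obtain ⟨i₀, hi₀⟩ := Ultrafilter.nonempty_of_mem hBmem
    have hspec₀ := hgspec i₀ hi₀.1
    rw [hi₀.2] at hspec₀
    refine ha ⟨B, hspec₀.1, ?_, hspec₀.2.2⟩
    intro b hb
    have : {i | a ∉ gradedNeutrality att ℓ (E i) ∧ g i = B} ⊆ {i | b ∈ E i} := by
      intro i hi
      have := (hgspec i hi.1).2.1
      rw [hi.2] at this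
      exact this hb
    exact Filter.mem_of_superset hBmem this
  · rintro ha ⟨B, hcard, hsub, hatt⟩
    have h1 := finset_subset_reducedMeet D hsub
    obtain ⟨i, hi1, hi2⟩ := Ultrafilter.nonempty_of_mem (Filter.inter_mem ha h1)
    exact hi1 ⟨B, hcard, hi2, hatt⟩

lemma gradedDefense_reducedMeet (att : A → A → Prop) (hfin : IsFinitary att)
    (m n : ℕ) (D : Ultrafilter I) (E : I → Set A) :
    gradedDefense att m n (reducedMeet D E)
      = reducedMeet D (fun i => gradedDefense att m n (E i)) := by
  unfold gradedDefense
  rw [gradedNeutrality_reducedMeet att hfin n D E,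
    gradedNeutrality_reducedMeet att hfin m D]

end Aux

/-- Closure of the fundamental semantics under reduced meets modulo an ultrafilter:
for a finitary AAF, if `D`-almost all `E i` are prefixed (resp. postfixed) points of
`N_ℓ` or `D_n^m`, then so is the reduced meet; consequently the ℓ-conflict-free,
mn-self-defended, ℓmn-admissible, ℓmn-complete and ℓmn-stable semantics are closed
under reduced meets. -/
theorem fundamental_semantics_closed_under_reducedMeet {A : Type*} [Nonempty A]
    (att : A → A → Prop) (hfin : IsFinitary att)
    (ℓ m n : ℕ) (hℓ : 0 < ℓ) (hm : 0 < m) (hn : 0 < n)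
    {I : Type*} [Nonempty I] (D : Ultrafilter I) (E : I → Set A) :
    ({i | E i ⊆ gradedNeutrality att ℓ (E i)} ∈ D →
      reducedMeet D E ⊆ gradedNeutrality att ℓ (reducedMeet D E)) ∧
    ({i | gradedNeutrality att ℓ (E i) ⊆ E i} ∈ D →
      gradedNeutrality att ℓ (reducedMeet D E) ⊆ reducedMeet D E) ∧
    ({i | E i ⊆ gradedDefense att m n (E i)} ∈ D →
      reducedMeet D E ⊆ gradedDefense att m n (reducedMeet D E)) ∧
    ({i | gradedDefense att m n (E i) ⊆ E i} ∈ D →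
      gradedDefense att m n (reducedMeet D E) ⊆ reducedMeet D E) ∧
    ({i | IsConflictFree att ℓ (E i)} ∈ D →
      IsConflictFree att ℓ (reducedMeet D E)) ∧
    ({i | E i ⊆ gradedDefense att m n (E i)} ∈ D →
      reducedMeet D E ⊆ gradedDefense att m n (reducedMeet D E)) ∧
    ({i | IsAdmissible att ℓ m n (E i)} ∈ D →
      IsAdmissible att ℓ m n (reducedMeet D E)) ∧
    ({i | IsCompleteExt att ℓ m n (E i)} ∈ D →
      IsCompleteExt att ℓ m n (reducedMeet D E)) ∧
    ({i | IsStableExt att ℓ m n (E i)} ∈ D →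
      IsStableExt att ℓ m n (reducedMeet D E)) := by
  have hN : ∀ k, gradedNeutrality att k (reducedMeet D E)
      = reducedMeet D (fun i => gradedNeutrality att k (E i)) :=
    fun k => gradedNeutrality_reducedMeet att hfin k D E
  have hD : gradedDefense att m n (reducedMeet D E)
      = reducedMeet D (fun i => gradedDefense att m n (E i)) :=
    gradedDefense_reducedMeet att hfin m n D E
  have p1 : {i | E i ⊆ gradedNeutrality att ℓ (E i)} ∈ D →
      reducedMeet D E ⊆ gradedNeutrality att ℓ (reducedMeet D E) := by
    intro h; rw [hN ℓ]; exact reducedMeet_mono D h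
  have p2 : {i | gradedNeutrality att ℓ (E i) ⊆ E i} ∈ D →
      gradedNeutrality att ℓ (reducedMeet D E) ⊆ reducedMeet D E := by
    intro h; rw [hN ℓ]; exact reducedMeet_mono D h
  have p3 : {i | E i ⊆ gradedDefense att m n (E i)} ∈ D →
      reducedMeet D E ⊆ gradedDefense att m n (reducedMeet D E) := by
    intro h; rw [hD]; exact reducedMeet_mono D h
  have p4 : {i | gradedDefense att m n (E i) ⊆ E i} ∈ D →
      gradedDefense att m n (reducedMeet D E) ⊆ reducedMeet D E := by
    intro h; rw [hD]; exact reducedMeet_mono D h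
  refine ⟨p1, p2, p3, p4, p1, p3, ?_, ?_, ?_⟩
  · intro h
    exact ⟨p1 (Filter.mem_of_superset h fun i hi => hi.1),
      p3 (Filter.mem_of_superset h fun i hi => hi.2)⟩
  · intro h
    refine ⟨p1 (Filter.mem_of_superset h fun i hi => hi.1), ?_⟩
    rw [hD]
    exact reducedMeet_congr D (Filter.mem_of_superset h fun i hi => hi.2)
  · intro h
    refine ⟨?_, ?_, p1 (Filter.mem_of_superset h fun i hi => hi.2.2)⟩
    · rw [hN n]
      exact reducedMeet_congr D (Filter.mem_of_superset h fun i hi => hi.1)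
    · rw [hN m]
      exact reducedMeet_congr D (Filter.mem_of_superset h fun i hi => hi.2.1)
end

section
/- Metatheorem on universal definability of range-related semantics: Let F = ⟨A, →⟩ be a finitary AAF, η a positive integer, and S a family of subsets of A that is closed under reduced meets modulo any ultrafilter. Then S is nonempty if and only if there exists E ∈ S whose range is ⊆-maximal, i.e., such that there is no E′ ∈ S with E ∪ E_η^+ ⊊ E′ ∪ E′_η^+. -/
open Set

variable {A : Type*}

universe u

/-- Metatheorem on universal definability of range-related semantics: for a finitary AAF
and a family `S` of subsets of `A` closed under reduced meets modulo any ultrafilter,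
`S` is nonempty iff it contains a member with ⊆-maximal range. -/
theorem range_maximal_of_closed_under_reducedMeet {A : Type u} [Nonempty A]
    (att : A → A → Prop) (hfin : IsFinitary att)
    (η : ℕ) (hη : 0 < η)
    (S : Set (Set A))
    (hS : ∀ (I : Type u) [Nonempty I] (D : Ultrafilter I) (X : I → Set A),
      (∀ i, X i ∈ S) → reducedMeet D X ∈ S) :
    S.Nonempty ↔
      ∃ E ∈ S, ¬ ∃ E' ∈ S, rangeOf att η E ⊂ rangeOf att η E' := by
  constructor
  · rintro ⟨E0, hE0⟩
    have H : ∀ c ⊆ (rangeOf att η) '' S, IsChain (· ⊆ ·) c → c.Nonempty →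
        ∃ ub ∈ (rangeOf att η) '' S, ∀ s ∈ c, s ⊆ ub := by
      intro c hcS hchain hcne
      haveI : Nonempty (↥c) := hcne.to_subtype
      -- choose a witness in S for each chain element
      have hwit : ∀ j : ↥c, ∃ E, E ∈ S ∧ rangeOf att η E = (j : Set A) := by
        intro j
        obtain ⟨E, hE, hEr⟩ := hcS j.2
        exact ⟨E, hE, hEr⟩
      choose X hXS hXr using hwit
      -- filter generated by the upper sets
      let U : ↥c → Set (↥c) := fun j => {i | (j : Set A) ⊆ (i : Set A)}
      have hUdir : Directed (· ≥ ·) (fun j => Filter.principal (U j)) := by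
        intro j k
        rcases hchain.total j.2 k.2 with h | h
        · exact ⟨k, Filter.principal_mono.2 (fun i hi => h.trans hi),
            Filter.principal_mono.2 (fun i hi => hi)⟩
        · exact ⟨j, Filter.principal_mono.2 (fun i hi => hi),
            Filter.principal_mono.2 (fun i hi => h.trans hi)⟩
      haveI hne : (⨅ j, Filter.principal (U j)).NeBot := by
        apply Filter.iInf_neBot_of_directed' hUdir
        intro j
        exact Filter.principal_neBot_iff.2 ⟨j, by simp [U]⟩
      let D : Ultrafilter (↥c) := Ultrafilter.of (⨅ j, Filter.principal (U j))
      have hUD : ∀ j : ↥c, U j ∈ D := by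
        intro j
        exact Ultrafilter.of_le _ (Filter.mem_iInf_of_mem j (Filter.mem_principal_self _))
      set Estar : Set A := reducedMeet D X with hEstar
      have hEstarS : Estar ∈ S := hS (↥c) D X hXS
      refine ⟨rangeOf att η Estar, ⟨Estar, hEstarS, rfl⟩, ?_⟩
      rintro s hs a ha
      set j : ↥c := ⟨s, hs⟩
      have hsub : U j ⊆ {i | a ∈ X i} ∪ {i | a ∈ rangePlus att η (X i)} := by
        intro i hi
        have hai : a ∈ (i : Set A) := hi (show a ∈ (j : Set A) from ha)
        rw [← hXr i] at hai
        exact hai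
      have hun : {i | a ∈ X i} ∪ {i | a ∈ rangePlus att η (X i)} ∈ D :=
        D.toFilter.mem_of_superset (hUD j) hsub
      rcases (Ultrafilter.union_mem_iff).1 hun with h1 | h2
      · exact Or.inl h1
      · -- a is attacked by η elements of X i for D-many i; use finitariness
        right
        set T : Set (Finset A) := ↑((hfin a).toFinset.powerset) with hT
        have hTfin : T.Finite := ((hfin a).toFinset.powerset).finite_toSet
        have hsub2 : {i | a ∈ rangePlus att η (X i)} ⊆
            ⋃ B ∈ T, {i : ↥c | B.card = η ∧ (↑B : Set A) ⊆ X i ∧ ∀ b ∈ B, att b a} := by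
          intro i hi
          obtain ⟨B, hBcard, hBsub, hBatt⟩ := hi
          refine Set.mem_biUnion ?_ ⟨hBcard, hBsub, hBatt⟩
          simp only [hT, Finset.coe_powerset, Set.mem_preimage, Set.mem_powerset_iff,
            Finset.coe_subset]
          intro b hb
          simp only [Set.Finite.mem_toFinset]
          exact hBatt b hb
        have hmem : (⋃ B ∈ T, {i : ↥c | B.card = η ∧ (↑B : Set A) ⊆ X i ∧ ∀ b ∈ B, att b a}) ∈ D :=
          D.toFilter.mem_of_superset h2 hsub2
        obtain ⟨B, _, hVB⟩ := (Ultrafilter.finite_biUnion_mem_iff hTfin).1 hmem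
        obtain ⟨i₀, hi₀⟩ := D.nonempty_of_mem hVB
        refine ⟨B, hi₀.1, ?_, hi₀.2.2⟩
        intro b hb
        show {i | b ∈ X i} ∈ D
        exact D.toFilter.mem_of_superset hVB (fun i hi => hi.2.1 hb)
    obtain ⟨m, _, hm⟩ := zorn_subset_nonempty ((rangeOf att η) '' S) H
      (rangeOf att η E0) ⟨E0, hE0, rfl⟩
    obtain ⟨E, hES, hEr⟩ := hm.1
    refine ⟨E, hES, ?_⟩
    rintro ⟨E', hE'S, hlt⟩
    rw [hEr] at hlt
    exact hlt.not_subset (hm.2 ⟨E', hE'S, rfl⟩ hlt.subset)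
  · rintro ⟨E, hE, -⟩
    exact ⟨E, hE⟩
end

section
/- Universal definability of graded range-related semantics: Let F = ⟨A, →⟩ be a finitary AAF and ℓ, m, n, η positive integers. Then (a) there exists an ℓ-η-stage extension of F (an ℓ-conflict-free set whose range is ⊆-maximal among ranges of ℓ-conflict-free sets) and there exists an ℓmn-η-range-related admissible set of F (an ℓmn-admissible set whose range is ⊆-maximal among ranges of ℓmn-admissible sets); (b) if F has an ℓmn-complete extension, then F has an ℓmn-η-semi-stable extension (an ℓmn-complete extension with ⊆-maximal range among ℓmn-complete extensions); (c) if F has an ℓmn-stable extension, then F has an ℓmn-η-range-related stable extension (an ℓmn-stable extension with ⊆-maximal range among ℓmn-stable extensions). -/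
open Set

variable {A : Type*}

universe u

section Aux

variable {A : Type u} {I : Type u}

/-- If `D`-many indices admit a `k`-sized attacking finset inside `E i`, then by
finitariness one fixed finset works `D`-often. -/
lemma exists_fixed_finset (att : A → A → Prop) (hfin : IsFinitary att)
    (D : Ultrafilter I) (E : I → Set A) (a : A) (k : ℕ) {S : Set I} (hS : S ∈ D)
    (h : ∀ i ∈ S, ∃ B : Finset A, B.card = k ∧ (↑B : Set A) ⊆ E i ∧ ∀ b ∈ B, att b a) :
    ∃ B : Finset A, B.card = k ∧ (∀ b ∈ B, att b a) ∧ {i | (↑B : Set A) ⊆ E i} ∈ D := by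
  classical
  set T : Finset A := (hfin a).toFinset with hT
  have hsub : S ⊆ ⋃ B ∈ (↑T.powerset : Set (Finset A)),
      {i | i ∈ S ∧ B.card = k ∧ (↑B : Set A) ⊆ E i ∧ ∀ b ∈ B, att b a} := by
    intro i hi
    obtain ⟨B, hc, hBE, hatt⟩ := h i hi
    refine Set.mem_biUnion ?_ ⟨hi, hc, hBE, hatt⟩
    simp only [Finset.mem_coe, Finset.mem_powerset]
    intro b hb
    rw [hT, Set.Finite.mem_toFinset]
    exact hatt b hb
  have hUmem : (⋃ B ∈ (↑T.powerset : Set (Finset A)),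
      {i | i ∈ S ∧ B.card = k ∧ (↑B : Set A) ⊆ E i ∧ ∀ b ∈ B, att b a}) ∈ D :=
    Filter.mem_of_superset hS hsub
  obtain ⟨B, -, hBD⟩ := (Ultrafilter.finite_biUnion_mem_iff T.powerset.finite_toSet).1 hUmem
  obtain ⟨i₀, hi₀⟩ := Ultrafilter.nonempty_of_mem hBD
  exact ⟨B, hi₀.2.1, hi₀.2.2.2, Filter.mem_of_superset hBD fun i hi => hi.2.2.1⟩

lemma finset_subset_reducedMeet_mem (D : Ultrafilter I) (E : I → Set A) (B : Finset A)
    (hB : (↑B : Set A) ⊆ reducedMeet D E) : {i | (↑B : Set A) ⊆ E i} ∈ D := by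
  have heq : {i | (↑B : Set A) ⊆ E i} = ⋂ b ∈ B, {i | b ∈ E i} := by
    ext i; simp [Set.subset_def]
  rw [heq]
  exact (Filter.biInter_finset_mem B).2 fun b hb => hB (by exact_mod_cast hb)

lemma reducedMeet_neut (att : A → A → Prop) (hfin : IsFinitary att)
    (D : Ultrafilter I) (E : I → Set A) (k : ℕ) :
    gradedNeutrality att k (reducedMeet D E)
      = reducedMeet D (fun i => gradedNeutrality att k (E i)) := by
  ext a
  simp only [gradedNeutrality, reducedMeet, Set.mem_setOf_eq]
  constructor
  · intro hna
    by_contra hnot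
    have hS : {i | ∃ B : Finset A, B.card = k ∧ (↑B : Set A) ⊆ E i ∧ ∀ b ∈ B, att b a} ∈ D := by
      have := (D.compl_mem_iff_notMem
        (s := {i | ¬ ∃ B : Finset A, B.card = k ∧ (↑B : Set A) ⊆ E i ∧ ∀ b ∈ B, att b a})).2 hnot
      simpa [Set.compl_setOf] using this
    obtain ⟨B, hc, hatt, hBD⟩ := exists_fixed_finset att hfin D E a k hS (fun i hi => hi)
    exact hna ⟨B, hc, fun b hb => Filter.mem_of_superset hBD (fun i hBi => hBi hb), hatt⟩
  · rintro hD ⟨B, hc, hBM, hatt⟩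
    have h1 : {i | (↑B : Set A) ⊆ E i} ∈ D := finset_subset_reducedMeet_mem D E B hBM
    obtain ⟨i, hi1, hi2⟩ := Ultrafilter.nonempty_of_mem (Filter.inter_mem h1 hD)
    exact hi2 ⟨B, hc, hi1, hatt⟩

lemma reducedMeet_defense (att : A → A → Prop) (hfin : IsFinitary att)
    (D : Ultrafilter I) (E : I → Set A) (m n : ℕ) :
    gradedDefense att m n (reducedMeet D E)
      = reducedMeet D (fun i => gradedDefense att m n (E i)) := by
  unfold gradedDefense
  rw [reducedMeet_neut att hfin D E n, reducedMeet_neut att hfin D _ m]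

lemma reducedMeet_rangePlus (att : A → A → Prop) (hfin : IsFinitary att)
    (D : Ultrafilter I) (E : I → Set A) (η : ℕ) :
    rangePlus att η (reducedMeet D E)
      = reducedMeet D (fun i => rangePlus att η (E i)) := by
  ext a
  simp only [rangePlus, reducedMeet, Set.mem_setOf_eq]
  constructor
  · rintro ⟨B, hc, hBM, hatt⟩
    have h1 : {i | (↑B : Set A) ⊆ E i} ∈ D := finset_subset_reducedMeet_mem D E B hBM
    exact Filter.mem_of_superset h1 fun i hi => ⟨B, hc, hi, hatt⟩
  · intro hS
    obtain ⟨B, hc, hatt, hBD⟩ := exists_fixed_finset att hfin D E a η hS (fun i hi => hi)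
    exact ⟨B, hc, fun b hb => Filter.mem_of_superset hBD (fun i hBi => hBi hb), hatt⟩

lemma reducedMeet_rangeOf (att : A → A → Prop) (hfin : IsFinitary att)
    (D : Ultrafilter I) (E : I → Set A) (η : ℕ) :
    rangeOf att η (reducedMeet D E)
      = reducedMeet D (fun i => rangeOf att η (E i)) := by
  unfold rangeOf
  rw [reducedMeet_rangePlus att hfin D E η]
  ext a
  simp only [Set.mem_union, reducedMeet, Set.mem_setOf_eq]
  constructor
  · rintro (ha | ha)
    · exact Filter.mem_of_superset ha fun i hi => Or.inl hi
    · exact Filter.mem_of_superset ha fun i hi => Or.inr hi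
  · intro ha
    have h2 : {i | a ∈ E i} ∪ {i | a ∈ rangePlus att η (E i)} ∈ D :=
      Filter.mem_of_superset ha fun i hi => hi
    exact (Ultrafilter.union_mem_iff).1 h2

/-- Zorn-style existence of a member of `C` with `⊆`-maximal range, given that `C`
is nonempty and closed under reduced meets modulo ultrafilters. -/
lemma exists_range_max (att : A → A → Prop) (hfin : IsFinitary att) (η : ℕ)
    (C : Set A → Prop) (hne : ∃ E, C E)
    (hU : ∀ (I : Type u) (D : Ultrafilter I) (E : I → Set A),
      (∀ i, C (E i)) → C (reducedMeet D E)) :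
    ∃ E, C E ∧ ¬ ∃ E', C E' ∧ rangeOf att η E ⊂ rangeOf att η E' := by
  classical
  obtain ⟨E0, hE0⟩ := hne
  let r : {E : Set A // C E} → {E : Set A // C E} → Prop :=
    fun E E' => rangeOf att η E.1 ⊆ rangeOf att η E'.1
  have hchain : ∀ c, IsChain r c → ∃ ub, ∀ a ∈ c, r a ub := by
    intro c hc
    rcases c.eq_empty_or_nonempty with rfl | hcne
    · exact ⟨⟨E0, hE0⟩, by simp⟩
    · have hcne' : Nonempty c := hcne.to_subtype
      set E : c → Set A := fun i => (i : {E : Set A // C E}).1 with hE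
      set T : c → Set c := fun j => {i | rangeOf att η (E j) ⊆ rangeOf att η (E i)} with hTdef
      have hdir : Directed (· ≥ ·) (fun j => Filter.principal (T j)) := by
        intro j1 j2
        have htot : rangeOf att η (E j1) ⊆ rangeOf att η (E j2) ∨
            rangeOf att η (E j2) ⊆ rangeOf att η (E j1) := by
          rcases eq_or_ne (j1 : {E : Set A // C E}) (j2 : {E : Set A // C E}) with heq | hne'
          · exact Or.inl (subset_of_eq (congrArg (rangeOf att η) (congrArg Subtype.val heq)))
          · rcases hc j1.2 j2.2 hne' with h | h
            · exact Or.inl h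
            · exact Or.inr h
        rcases htot with h | h
        · exact ⟨j2, Filter.principal_mono.2 fun i hi => h.trans hi,
            Filter.principal_mono.2 fun i hi => hi⟩
        · exact ⟨j1, Filter.principal_mono.2 fun i hi => hi,
            Filter.principal_mono.2 fun i hi => h.trans hi⟩
      have hNB : ∀ j, (Filter.principal (T j)).NeBot := fun j =>
        Filter.principal_neBot_iff.2 ⟨j, Set.Subset.refl _⟩
      haveI hFne : (⨅ j, Filter.principal (T j)).NeBot :=
        Filter.iInf_neBot_of_directed' hdir hNB
      set D : Ultrafilter c := Ultrafilter.of (⨅ j, Filter.principal (T j))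
      have hT : ∀ j, T j ∈ D := fun j =>
        Ultrafilter.of_le _ (Filter.mem_iInf_of_mem j (Filter.mem_principal_self _))
      refine ⟨⟨reducedMeet D E, hU c D E fun i => (i : {E : Set A // C E}).2⟩, ?_⟩
      intro a ha
      show rangeOf att η a.1 ⊆ rangeOf att η (reducedMeet D E)
      rw [reducedMeet_rangeOf att hfin D E η]
      intro x hx
      show {i | x ∈ rangeOf att η (E i)} ∈ D
      exact Filter.mem_of_superset (hT ⟨a, ha⟩) fun i hi => hi hx
  obtain ⟨m, hm⟩ := exists_maximal_of_chains_bounded hchain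
    (fun {a b c} hab hbc => Set.Subset.trans hab hbc)
  refine ⟨m.1, m.2, ?_⟩
  rintro ⟨E', hC', hss⟩
  exact hss.not_subset (hm ⟨E', hC'⟩ hss.subset)

end Aux

/-- Universal definability of graded range-related semantics for finitary AAFs:
(a) stage extensions and range-related admissible sets always exist; (b) if a complete
extension exists then a semi-stable extension exists; (c) if a stable extension exists
then a range-related stable extension exists. -/
theorem exists_range_related_extensions {A : Type*} [Nonempty A]
    (att : A → A → Prop) (hfin : IsFinitary att)
    (ℓ m n η : ℕ) (hℓ : 0 < ℓ) (hm : 0 < m) (hn : 0 < n) (hη : 0 < η) :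
    ((∃ E : Set A, IsConflictFree att ℓ E ∧
        ¬ ∃ E' : Set A, IsConflictFree att ℓ E' ∧
          rangeOf att η E ⊂ rangeOf att η E') ∧
     (∃ E : Set A, IsAdmissible att ℓ m n E ∧
        ¬ ∃ E' : Set A, IsAdmissible att ℓ m n E' ∧
          rangeOf att η E ⊂ rangeOf att η E')) ∧
    ((∃ E : Set A, IsCompleteExt att ℓ m n E) →
      ∃ E : Set A, IsCompleteExt att ℓ m n E ∧
        ¬ ∃ E' : Set A, IsCompleteExt att ℓ m n E' ∧
          rangeOf att η E ⊂ rangeOf att η E') ∧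
    ((∃ E : Set A, IsStableExt att ℓ m n E) →
      ∃ E : Set A, IsStableExt att ℓ m n E ∧
        ¬ ∃ E' : Set A, IsStableExt att ℓ m n E' ∧
          rangeOf att η E ⊂ rangeOf att η E') := by
  classical
  have hU_cf : ∀ (I : Type _) (D : Ultrafilter I) (E : I → Set A),
      (∀ i, IsConflictFree att ℓ (E i)) → IsConflictFree att ℓ (reducedMeet D E) := by
    intro I D E hCE a ha
    rw [reducedMeet_neut att hfin D E ℓ]
    exact Filter.mem_of_superset ha fun i hi => hCE i hi
  have hU_adm : ∀ (I : Type _) (D : Ultrafilter I) (E : I → Set A),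
      (∀ i, IsAdmissible att ℓ m n (E i)) → IsAdmissible att ℓ m n (reducedMeet D E) := by
    intro I D E hCE
    constructor
    · intro a ha
      rw [reducedMeet_neut att hfin D E ℓ]
      exact Filter.mem_of_superset ha fun i hi => (hCE i).1 hi
    · intro a ha
      rw [reducedMeet_defense att hfin D E m n]
      exact Filter.mem_of_superset ha fun i hi => (hCE i).2 hi
  have hU_comp : ∀ (I : Type _) (D : Ultrafilter I) (E : I → Set A),
      (∀ i, IsCompleteExt att ℓ m n (E i)) → IsCompleteExt att ℓ m n (reducedMeet D E) := by
    intro I D E hCE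
    constructor
    · intro a ha
      rw [reducedMeet_neut att hfin D E ℓ]
      exact Filter.mem_of_superset ha fun i hi => (hCE i).1 hi
    · rw [reducedMeet_defense att hfin D E m n]
      have hfe : (fun i => gradedDefense att m n (E i)) = E :=
        funext fun i => ((hCE i).2).symm
      rw [hfe]
  have hU_stab : ∀ (I : Type _) (D : Ultrafilter I) (E : I → Set A),
      (∀ i, IsStableExt att ℓ m n (E i)) → IsStableExt att ℓ m n (reducedMeet D E) := by
    intro I D E hCE
    refine ⟨?_, ?_, ?_⟩
    · rw [reducedMeet_neut att hfin D E n]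
      have hfe : (fun i => gradedNeutrality att n (E i)) = E :=
        funext fun i => ((hCE i).1).symm
      rw [hfe]
    · rw [reducedMeet_neut att hfin D E m]
      have hfe : (fun i => gradedNeutrality att m (E i)) = E :=
        funext fun i => ((hCE i).2.1).symm
      rw [hfe]
    · intro a ha
      rw [reducedMeet_neut att hfin D E ℓ]
      exact Filter.mem_of_superset ha fun i hi => (hCE i).2.2 hi
  have hcf_empty : IsConflictFree att ℓ (∅ : Set A) := fun a ha => absurd ha (Set.notMem_empty a)
  refine ⟨⟨?_, ?_⟩, ?_, ?_⟩
  · exact exists_range_max att hfin η (IsConflictFree att ℓ) ⟨∅, hcf_empty⟩ hU_cf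
  · exact exists_range_max att hfin η (IsAdmissible att ℓ m n)
      ⟨∅, hcf_empty, Set.empty_subset _⟩ hU_adm
  · intro hne
    exact exists_range_max att hfin η (IsCompleteExt att ℓ m n) hne hU_comp
  · intro hne
    exact exists_range_max att hfin η (IsStableExt att ℓ m n) hne hU_stab
end

section
/- Compactness of extensibility: Let A be a nonempty set and S a family of subsets of A that is closed under reduced meets modulo any ultrafilter. Then for every X ⊆ A, there exists E ∈ S with X ⊆ E if and only if for every finite subset Y of X there exists E ∈ S with Y ⊆ E. -/
open Set

variable {A : Type*}

universe u

/-- Compactness of extensibility: if `S` is a family of subsets of `A` closed under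
reduced meets modulo any ultrafilter, then `X` is contained in some member of `S` iff
every finite subset of `X` is contained in some member of `S`. -/
theorem extensible_iff_finitely_extensible {A : Type u} [Nonempty A]
    (S : Set (Set A))
    (hS : ∀ (I : Type u) [Nonempty I] (D : Ultrafilter I) (X : I → Set A),
      (∀ i, X i ∈ S) → reducedMeet D X ∈ S)
    (X : Set A) :
    (∃ E ∈ S, X ⊆ E) ↔
      ∀ Y : Set A, Y ⊆ X → Y.Finite → ∃ E ∈ S, Y ⊆ E := by
  classical
  constructor
  · rintro ⟨E, hE, hXE⟩ Y hYX _
    exact ⟨E, hE, hYX.trans hXE⟩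
  · intro h
    set I := {Y : Set A // Y ⊆ X ∧ Y.Finite} with hIdef
    have hI : Nonempty I := ⟨⟨∅, empty_subset _, finite_empty⟩⟩
    choose E hES hYE using fun i : I => h i.1 i.2.1 i.2.2
    let g : Set (Set I) := {s | ∃ a ∈ X, s = {i : I | a ∈ i.1}}
    have hFne : (Filter.generate g).NeBot := by
      rw [Filter.generate_neBot_iff]
      intro t hts htf
      have hts' : ∀ s ∈ t, ∃ a ∈ X, s = {i : I | a ∈ i.1} := fun s hs => hts hs
      choose! a haX hsa using hts'
      refine ⟨⟨a '' t, ?_, htf.image a⟩, ?_⟩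
      · rintro x ⟨s, hs, rfl⟩; exact haX s hs
      · intro s hs
        rw [hsa s hs]
        exact ⟨s, hs, rfl⟩
    let D := @Ultrafilter.of I (Filter.generate g) hFne
    refine ⟨reducedMeet D E, hS I D E hES, ?_⟩
    intro x hx
    have hgen : {i : I | x ∈ i.1} ∈ Filter.generate g :=
      Filter.mem_generate_of_mem ⟨x, hx, rfl⟩
    have hD : {i : I | x ∈ i.1} ∈ D := Ultrafilter.of_le _ hgen
    exact Filter.mem_of_superset hD fun i hi => hYE i hi
end

section
/- Lindenbaum property for families closed under reduced meets: Let A be a nonempty set and S a family of subsets of A that is closed under reduced meets modulo any ultrafilter. Then (a) every E ∈ S is contained in a ⊆-maximal element of S; and (b) if S is nonempty, then S has at least one ⊆-maximal element. -/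
open Set

variable {A : Type*}

universe u

/-- Lindenbaum property for families closed under reduced meets modulo any ultrafilter:
(a) every member of `S` is contained in a ⊆-maximal member of `S`; (b) if `S` is
nonempty then `S` has a ⊆-maximal member. -/
theorem lindenbaum_of_closed_under_reducedMeet {A : Type u} [Nonempty A]
    (S : Set (Set A))
    (hS : ∀ (I : Type u) [Nonempty I] (D : Ultrafilter I) (X : I → Set A),
      (∀ i, X i ∈ S) → reducedMeet D X ∈ S) :
    (∀ E ∈ S, ∃ M ∈ S, E ⊆ M ∧ ∀ E' ∈ S, M ⊆ E' → M = E') ∧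
    (S.Nonempty → ∃ M ∈ S, ∀ E' ∈ S, M ⊆ E' → M = E') := by
  have key : ∀ E ∈ S, ∃ M ∈ S, E ⊆ M ∧ ∀ E' ∈ S, M ⊆ E' → M = E' := by
    intro E hE
    have H : ∀ c ⊆ S, IsChain (· ⊆ ·) c → c.Nonempty → ∃ ub ∈ S, ∀ s ∈ c, s ⊆ ub := by
      intro c hcS hchain hcne
      haveI : Nonempty c := hcne.to_subtype
      set U : c → Set c := fun x => {i | (x : Set A) ⊆ (i : Set A)} with hU
      have hdir : Directed (· ≥ ·) (fun x : c => (Filter.principal (U x))) := by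
        rintro x y
        rcases hchain.total x.2 y.2 with h | h
        · exact ⟨y, Filter.principal_mono.2 (fun i hi => h.trans hi),
            Filter.principal_mono.2 (fun i hi => hi)⟩
        · exact ⟨x, Filter.principal_mono.2 (fun i hi => hi),
            Filter.principal_mono.2 (fun i hi => h.trans hi)⟩
      have hne : ∀ x : c, (Filter.principal (U x)).NeBot := by
        intro x
        rw [Filter.principal_neBot_iff]
        exact ⟨x, Set.Subset.rfl⟩
      have : (⨅ x : c, Filter.principal (U x)).NeBot :=
        Filter.iInf_neBot_of_directed' hdir hne
      let D := Ultrafilter.of (⨅ x : c, Filter.principal (U x))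
      have hD : ∀ x : c, U x ∈ D := by
        intro x
        exact Ultrafilter.of_le _ (Filter.mem_iInf_of_mem x (Filter.mem_principal_self _))
      refine ⟨reducedMeet D (fun i : c => (i : Set A)), hS c D _ (fun i => hcS i.2), ?_⟩
      intro s hs a ha
      exact Filter.mem_of_superset (hD ⟨s, hs⟩) (fun i hi => hi ha)
    obtain ⟨M, hEM, hM⟩ := zorn_subset_nonempty S H E hE
    exact ⟨M, hM.1, hEM, fun E' hE' hME' => (hM.eq_of_subset hE' hME')⟩
  refine ⟨key, fun ⟨E, hE⟩ => ?_⟩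
  obtain ⟨M, hM, _, hmax⟩ := key E hE
  exact ⟨M, hM, hmax⟩
end
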